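/- Let M be a vertically monoidal double category that is double braided, with vertical double braiding Φ. Then the monoidal product ⊗ : M×M → M is a lax monoidal double functor, with lax monoidal structure 2-cocycle given at 1h-cells f, g, h, l by the 2-cell components Id_f ⊗ Φ_{g,h} ⊗ Id_l, the associativity (cocycle) axiom holding by the interchange law of double categories, and the unitality (normalization) axioms holding trivially upon identifying the unit 1v-cell component ⊗⁰ : I → I⊗I with 1^I ⊗ 1^I. -/

import Mathlib

/-!
Common infrastructure: (pre)double categories, companions/conjoints, lax double
functors, vertical/horizontal transformations, modifications, monoidal and
premonoidal structures, braidings, actions, strengths, and the coPara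
construction, following Femić, "Para construction for double categories".
-/

set_option autoImplicit false

universe u

/-- The underlying data of a (pseudo)double category: objects, horizontal 1-cells,
vertical 1-cells and squares, together with compositions and identities,
but without strictness equations (so that weak examples such as `coPara` fit).
In a square `Sq f g u v`, `f` is the top, `g` the bottom, `u` the left and
`v` the right boundary. -/
structure PreDoubleCat : Type (u + 1) where
  Obj : Type u
  Hor : Obj → Obj → Type u
  Ver : Obj → Obj → Type u
  Sq : ∀ {A B A' B' : Obj}, Hor A B → Hor A' B' → Ver A A' → Ver B B' → Type u
  hId : ∀ A, Hor A A
  hComp : ∀ {A B C}, Hor A B → Hor B C → Hor A C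
  vId : ∀ A, Ver A A
  vComp : ∀ {A B C}, Ver A B → Ver B C → Ver A C
  sqIdH : ∀ {A B} (f : Hor A B), Sq f f (vId A) (vId B)
  sqIdV : ∀ {A B} (u : Ver A B), Sq (hId A) (hId B) u u
  hCompSq : ∀ {A B C A' B' C' : Obj} {f : Hor A B} {g : Hor B C} {f' : Hor A' B'}
      {g' : Hor B' C'} {u : Ver A A'} {w : Ver B B'} {x : Ver C C'},
      Sq f f' u w → Sq g g' w x → Sq (hComp f g) (hComp f' g') u x
  vCompSq : ∀ {A B A' B' A'' B'' : Obj} {f : Hor A B} {f' : Hor A' B'} {f'' : Hor A'' B''}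
      {u : Ver A A'} {v : Ver B B'} {u' : Ver A' A''} {v' : Ver B' B''},
      Sq f f' u v → Sq f' f'' u' v' → Sq f f'' (vComp u u') (vComp v v')

namespace PreDoubleCat

variable (B : PreDoubleCat.{u})

/-- Horizontally globular squares. -/
abbrev Glob {A A' : B.Obj} (f g : B.Hor A A') : Type u :=
  B.Sq f g (B.vId A) (B.vId A')

/-- A (vertically) invertible globular square (data only). -/
structure GlobIso {A A' : B.Obj} (f g : B.Hor A A') : Type u where
  fwd : B.Glob f g
  bwd : B.Glob g f

/-- A horizontal equivalence 1-cell (data only). -/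
structure HEquiv (A A' : B.Obj) : Type u where
  fwd : B.Hor A A'
  bwd : B.Hor A' A
  unitIso : B.GlobIso (B.hComp fwd bwd) (B.hId A)
  counitIso : B.GlobIso (B.hComp bwd fwd) (B.hId A')

/-- An invertible vertical 1-cell. -/
structure VIso {A A' : B.Obj} (u : B.Ver A A') : Type u where
  inv : B.Ver A' A
  left : B.vComp u inv = B.vId A
  right : B.vComp inv u = B.vId A'

end PreDoubleCat

/-- A (strict) double category: the vertical direction is strict and the
horizontal composition is associative and unital on the nose. -/
structure DoubleCat extends PreDoubleCat where
  hId_comp : ∀ {A B} (f : Hor A B), hComp (hId A) f = f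
  comp_hId : ∀ {A B} (f : Hor A B), hComp f (hId B) = f
  hAssoc : ∀ {A B C D} (f : Hor A B) (g : Hor B C) (h : Hor C D),
    hComp (hComp f g) h = hComp f (hComp g h)
  vId_comp : ∀ {A B} (u : Ver A B), vComp (vId A) u = u
  comp_vId : ∀ {A B} (u : Ver A B), vComp u (vId B) = u
  vAssoc : ∀ {A B C D} (u : Ver A B) (v : Ver B C) (w : Ver C D),
    vComp (vComp u v) w = vComp u (vComp v w)

/-- A companion of a vertical 1-cell `u : A → A'`: a horizontal 1-cell `hat`
together with binding squares `eps` and `eta` such that the horizontal composite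
`[eta | eps]` is the identity square on `hat` and the vertical composite of `eta`
followed by `eps` is the identity square on `u`. -/
structure Companion (B : PreDoubleCat.{u}) {A A' : B.Obj} (u : B.Ver A A') : Type u where
  hat : B.Hor A A'
  eps : B.Sq hat (B.hId A') u (B.vId A')
  eta : B.Sq (B.hId A) hat (B.vId A) u
  hor_eq : HEq (B.hCompSq eta eps) (B.sqIdH hat)
  ver_eq : HEq (B.vCompSq eta eps) (B.sqIdV u)

/-- A vertical 1-cell is (companion-)liftable when it has a companion. -/
def PreDoubleCat.Liftable (B : PreDoubleCat.{u}) {A A' : B.Obj} (u : B.Ver A A') : Prop :=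
  Nonempty (Companion B u)

/-- A conjoint of a vertical 1-cell `u : A → A'`: a horizontal 1-cell
`check : A' → A` with binding squares `epsStar`, `etaStar` satisfying the dual
equations `[epsStar | etaStar] = Id_check` and `etaStar ; epsStar = Id^u`. -/
structure Conjoint (B : PreDoubleCat.{u}) {A A' : B.Obj} (u : B.Ver A A') : Type u where
  check : B.Hor A' A
  epsStar : B.Sq check (B.hId A') (B.vId A') u
  etaStar : B.Sq (B.hId A) check u (B.vId A)
  hor_eq : HEq (B.hCompSq epsStar etaStar) (B.sqIdH check)
  ver_eq : HEq (B.vCompSq etaStar epsStar) (B.sqIdV u)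

/-- A lax double functor (lax in the horizontal direction, strict in the
vertical direction). -/
structure LaxDoubleFunctor (C D : PreDoubleCat.{u}) : Type u where
  obj : C.Obj → D.Obj
  hor : ∀ {A B : C.Obj}, C.Hor A B → D.Hor (obj A) (obj B)
  ver : ∀ {A B : C.Obj}, C.Ver A B → D.Ver (obj A) (obj B)
  sq : ∀ {A B A' B' : C.Obj} {f : C.Hor A B} {g : C.Hor A' B'} {u : C.Ver A A'}
      {v : C.Ver B B'}, C.Sq f g u v → D.Sq (hor f) (hor g) (ver u) (ver v)
  ver_id : ∀ A, ver (C.vId A) = D.vId (obj A)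
  ver_comp : ∀ {A B E : C.Obj} (u : C.Ver A B) (v : C.Ver B E),
      ver (C.vComp u v) = D.vComp (ver u) (ver v)
  hcomp : ∀ {A B E : C.Obj} (f : C.Hor A B) (g : C.Hor B E),
      D.Glob (D.hComp (hor f) (hor g)) (hor (C.hComp f g))
  hunit : ∀ A, D.Glob (D.hId (obj A)) (hor (C.hId A))

/-- A pseudodouble functor: a lax double functor with invertible compositors. -/
structure PseudoDoubleFunctor (C D : PreDoubleCat.{u}) extends LaxDoubleFunctor C D where
  hcompInv : ∀ {A B E : C.Obj} (f : C.Hor A B) (g : C.Hor B E),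
      D.Glob (hor (C.hComp f g)) (D.hComp (hor f) (hor g))
  hunitInv : ∀ A, D.Glob (hor (C.hId A)) (D.hId (obj A))

/-- A vertical strict transformation between lax double functors. -/
structure VerTransf {C D : PreDoubleCat.{u}} (F G : LaxDoubleFunctor C D) : Type u where
  app : ∀ A, D.Ver (F.obj A) (G.obj A)
  nat_ver : ∀ {A B} (u : C.Ver A B),
      D.vComp (F.ver u) (app B) = D.vComp (app A) (G.ver u)
  sqApp : ∀ {A B} (f : C.Hor A B), D.Sq (F.hor f) (G.hor f) (app A) (app B)
  nat_sq : ∀ {A B A' B'} {f : C.Hor A B} {g : C.Hor A' B'} {u : C.Ver A A'}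
      {v : C.Ver B B'} (a : C.Sq f g u v),
      HEq (D.vCompSq (F.sq a) (sqApp g)) (D.vCompSq (sqApp f) (G.sq a))

/-- Liftability of a vertical transformation: all its vertical 1-cell
components have companions. -/
def VerTransf.IsLiftable {C D : PreDoubleCat.{u}} {F G : LaxDoubleFunctor C D}
    (σ : VerTransf F G) : Prop :=
  ∀ A, D.Liftable (σ.app A)

/-- A horizontal pseudonatural transformation between lax double functors. -/
structure HorTransf {C D : PreDoubleCat.{u}} (F G : LaxDoubleFunctor C D) : Type u where
  app : ∀ A, D.Hor (F.obj A) (G.obj A)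
  sqVer : ∀ {A B} (u : C.Ver A B), D.Sq (app A) (app B) (F.ver u) (G.ver u)
  sqHor : ∀ {A B} (f : C.Hor A B),
      D.GlobIso (D.hComp (F.hor f) (app B)) (D.hComp (app A) (G.hor f))

/-- A modification between two horizontal transformations. -/
structure HorModif {C D : PreDoubleCat.{u}} {F G : LaxDoubleFunctor C D}
    (α β : HorTransf F G) : Type u where
  app : ∀ A, D.Glob (α.app A) (β.app A)

/-- A modification between two vertical transformations. -/
structure VerModif {C D : PreDoubleCat.{u}} {F G : LaxDoubleFunctor C D}
    (σ τ : VerTransf F G) : Type u where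
  app : ∀ A, D.Sq (D.hId (F.obj A)) (D.hId (G.obj A)) (σ.app A) (τ.app A)

/-- A (mixed) modification bounded by two horizontal transformations `α`, `β` and
two vertical transformations `σ`, `τ`. -/
structure MixedModif {C D : PreDoubleCat.{u}} {F G F' G' : LaxDoubleFunctor C D}
    (α : HorTransf F G) (β : HorTransf F' G') (σ : VerTransf F F') (τ : VerTransf G G') :
    Type u where
  app : ∀ A, D.Sq (α.app A) (β.app A) (σ.app A) (τ.app A)

/-- A composable chain of vertical strict transformations. -/
inductive VerChain {C D : PreDoubleCat.{u}} :
    LaxDoubleFunctor C D → LaxDoubleFunctor C D → Type u where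
  | nil (F : LaxDoubleFunctor C D) : VerChain F F
  | cons {F G H : LaxDoubleFunctor C D} (σ : VerTransf F G) (c : VerChain G H) : VerChain F H

namespace VerChain

variable {C D : PreDoubleCat.{u}}

/-- The composite vertical 1-cell components of a chain of vertical
transformations. -/
def app : {F G : LaxDoubleFunctor C D} → VerChain F G → ∀ A, D.Ver (F.obj A) (G.obj A)
  | _, _, nil F, A => D.vId (F.obj A)
  | _, _, cons σ c, A => D.vComp (σ.app A) (app c A)

/-- A choice of companions for all the 1-cell components of all the members of
a chain of vertical transformations. -/
def Comps : {F G : LaxDoubleFunctor C D} → VerChain F G → Type u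
  | _, _, nil _ => PUnit
  | _, _, cons σ c => (∀ A, Companion D (σ.app A)) × Comps c

/-- The composite of the chosen companion 1-cells: the 1-cell components of the
companion-lift of the chain. -/
def liftApp : {F G : LaxDoubleFunctor C D} → (c : VerChain F G) → Comps c →
    ∀ A, D.Hor (F.obj A) (G.obj A)
  | _, _, nil F, _, A => D.hId (F.obj A)
  | _, _, cons _ c, k, A => D.hComp ((k.1 A).hat) (liftApp c k.2 A)

/-- The number of transformations in the chain. -/
def length : {F G : LaxDoubleFunctor C D} → VerChain F G → Nat
  | _, _, nil _ => 0
  | _, _, cons _ c => length c + 1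

end VerChain

/-- The data of a tensor product pseudodouble functor `B × B → B`, given
componentwise. -/
structure TensorData (B : PreDoubleCat.{u}) : Type u where
  obj : B.Obj → B.Obj → B.Obj
  hor : ∀ {A A' X X' : B.Obj}, B.Hor A A' → B.Hor X X' → B.Hor (obj A X) (obj A' X')
  ver : ∀ {A A' X X' : B.Obj}, B.Ver A A' → B.Ver X X' → B.Ver (obj A X) (obj A' X')
  sq : ∀ {A₁ A₂ A₃ A₄ X₁ X₂ X₃ X₄ : B.Obj}
      {f : B.Hor A₁ A₂} {g : B.Hor A₃ A₄} {u : B.Ver A₁ A₃} {v : B.Ver A₂ A₄}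
      {f' : B.Hor X₁ X₂} {g' : B.Hor X₃ X₄} {u' : B.Ver X₁ X₃} {v' : B.Ver X₂ X₄},
      B.Sq f g u v → B.Sq f' g' u' v' →
      B.Sq (hor f f') (hor g g') (ver u u') (ver v v')
  ver_id : ∀ A X, ver (B.vId A) (B.vId X) = B.vId (obj A X)
  ver_comp : ∀ {A₁ A₂ A₃ X₁ X₂ X₃ : B.Obj} (u : B.Ver A₁ A₂) (u' : B.Ver A₂ A₃)
      (v : B.Ver X₁ X₂) (v' : B.Ver X₂ X₃),
      ver (B.vComp u u') (B.vComp v v') = B.vComp (ver u v) (ver u' v')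
  hcomp : ∀ {A₁ A₂ A₃ X₁ X₂ X₃ : B.Obj} (f : B.Hor A₁ A₂) (f' : B.Hor A₂ A₃)
      (g : B.Hor X₁ X₂) (g' : B.Hor X₂ X₃),
      B.GlobIso (B.hComp (hor f g) (hor f' g')) (hor (B.hComp f f') (B.hComp g g'))
  hunit : ∀ A X, B.GlobIso (B.hId (obj A X)) (hor (B.hId A) (B.hId X))

/-- A horizontally monoidal double category: the coherence constraints are
horizontal equivalences and the Gordon–Power–Street modification data `p`, `m`,
`l`, `r` are invertible globular squares. -/
structure HorMonoidal (B : PreDoubleCat.{u}) : Type u where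
  T : TensorData B
  unit : B.Obj
  assoc : ∀ A X Y, B.Hor (T.obj (T.obj A X) Y) (T.obj A (T.obj X Y))
  assocInv : ∀ A X Y, B.Hor (T.obj A (T.obj X Y)) (T.obj (T.obj A X) Y)
  assocIso₁ : ∀ A X Y,
      B.GlobIso (B.hComp (assoc A X Y) (assocInv A X Y)) (B.hId (T.obj (T.obj A X) Y))
  assocIso₂ : ∀ A X Y,
      B.GlobIso (B.hComp (assocInv A X Y) (assoc A X Y)) (B.hId (T.obj A (T.obj X Y)))
  lunit : ∀ A, B.Hor (T.obj unit A) A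
  lunitInv : ∀ A, B.Hor A (T.obj unit A)
  lunitIso₁ : ∀ A, B.GlobIso (B.hComp (lunit A) (lunitInv A)) (B.hId (T.obj unit A))
  lunitIso₂ : ∀ A, B.GlobIso (B.hComp (lunitInv A) (lunit A)) (B.hId A)
  runit : ∀ A, B.Hor (T.obj A unit) A
  runitInv : ∀ A, B.Hor A (T.obj A unit)
  runitIso₁ : ∀ A, B.GlobIso (B.hComp (runit A) (runitInv A)) (B.hId (T.obj A unit))
  runitIso₂ : ∀ A, B.GlobIso (B.hComp (runitInv A) (runit A)) (B.hId A)
  assocVer : ∀ {A A' X X' Y Y' : B.Obj} (u : B.Ver A A') (v : B.Ver X X') (w : B.Ver Y Y'),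
      B.Sq (assoc A X Y) (assoc A' X' Y') (T.ver (T.ver u v) w) (T.ver u (T.ver v w))
  lunitVer : ∀ {A A' : B.Obj} (u : B.Ver A A'),
      B.Sq (lunit A) (lunit A') (T.ver (B.vId unit) u) u
  runitVer : ∀ {A A' : B.Obj} (u : B.Ver A A'),
      B.Sq (runit A) (runit A') (T.ver u (B.vId unit)) u
  assocHor : ∀ {A A' X X' Y Y' : B.Obj} (f : B.Hor A A') (g : B.Hor X X') (h : B.Hor Y Y'),
      B.GlobIso (B.hComp (T.hor (T.hor f g) h) (assoc A' X' Y'))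
        (B.hComp (assoc A X Y) (T.hor f (T.hor g h)))
  lunitHor : ∀ {A A' : B.Obj} (f : B.Hor A A'),
      B.GlobIso (B.hComp (T.hor (B.hId unit) f) (lunit A')) (B.hComp (lunit A) f)
  runitHor : ∀ {A A' : B.Obj} (f : B.Hor A A'),
      B.GlobIso (B.hComp (T.hor f (B.hId unit)) (runit A')) (B.hComp (runit A) f)
  pMod : ∀ A X Y Z,
      B.GlobIso
        (B.hComp (B.hComp (T.hor (assoc A X Y) (B.hId Z)) (assoc A (T.obj X Y) Z))
          (T.hor (B.hId A) (assoc X Y Z)))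
        (B.hComp (assoc (T.obj A X) Y Z) (assoc A X (T.obj Y Z)))
  mMod : ∀ A X,
      B.GlobIso (B.hComp (assoc A unit X) (T.hor (B.hId A) (lunit X)))
        (T.hor (runit A) (B.hId X))
  lMod : ∀ A X,
      B.GlobIso (B.hComp (assoc unit A X) (lunit (T.obj A X)))
        (T.hor (lunit A) (B.hId X))
  rMod : ∀ A X,
      B.GlobIso (B.hComp (assoc A X unit) (T.hor (B.hId A) (runit X)))
        (runit (T.obj A X))

/-- A (vertically) monoidal double category in Shulman's sense: the coherence
constraints are invertible vertical strict transformations satisfying the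
pentagon and triangle axioms via identity vertical modifications. -/
structure VerMonoidal (B : PreDoubleCat.{u}) : Type u where
  T : TensorData B
  unit : B.Obj
  assoc : ∀ A X Y, B.Ver (T.obj (T.obj A X) Y) (T.obj A (T.obj X Y))
  assocIso : ∀ A X Y, B.VIso (assoc A X Y)
  lunit : ∀ A, B.Ver (T.obj unit A) A
  lunitIso : ∀ A, B.VIso (lunit A)
  runit : ∀ A, B.Ver (T.obj A unit) A
  runitIso : ∀ A, B.VIso (runit A)
  assocSq : ∀ {A A' X X' Y Y' : B.Obj} (f : B.Hor A A') (g : B.Hor X X') (h : B.Hor Y Y'),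
      B.Sq (T.hor (T.hor f g) h) (T.hor f (T.hor g h)) (assoc A X Y) (assoc A' X' Y')
  assocSqInv : ∀ {A A' X X' Y Y' : B.Obj} (f : B.Hor A A') (g : B.Hor X X') (h : B.Hor Y Y'),
      B.Sq (T.hor f (T.hor g h)) (T.hor (T.hor f g) h)
        ((assocIso A X Y).inv) ((assocIso A' X' Y').inv)
  lunitSq : ∀ {A A' : B.Obj} (f : B.Hor A A'),
      B.Sq (T.hor (B.hId unit) f) f (lunit A) (lunit A')
  runitSq : ∀ {A A' : B.Obj} (f : B.Hor A A'),
      B.Sq (T.hor f (B.hId unit)) f (runit A) (runit A')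
  assocNat : ∀ {A A' X X' Y Y' : B.Obj} (u : B.Ver A A') (v : B.Ver X X') (w : B.Ver Y Y'),
      B.vComp (T.ver (T.ver u v) w) (assoc A' X' Y') =
        B.vComp (assoc A X Y) (T.ver u (T.ver v w))
  lunitNat : ∀ {A A' : B.Obj} (u : B.Ver A A'),
      B.vComp (T.ver (B.vId unit) u) (lunit A') = B.vComp (lunit A) u
  runitNat : ∀ {A A' : B.Obj} (u : B.Ver A A'),
      B.vComp (T.ver u (B.vId unit)) (runit A') = B.vComp (runit A) u
  pentagon : ∀ A X Y Z,
      B.vComp (assoc (T.obj A X) Y Z) (assoc A X (T.obj Y Z)) =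
        B.vComp (B.vComp (T.ver (assoc A X Y) (B.vId Z)) (assoc A (T.obj X Y) Z))
          (T.ver (B.vId A) (assoc X Y Z))
  triangle : ∀ A X,
      B.vComp (assoc A unit X) (T.ver (B.vId A) (lunit X)) = T.ver (runit A) (B.vId X)

/-- A vertically monoidal structure is liftable when all the components of its
constraints have companions. -/
def VerMonoidal.IsLiftable {B : PreDoubleCat.{u}} (M : VerMonoidal B) : Prop :=
  (∀ A X Y, B.Liftable (M.assoc A X Y)) ∧ (∀ A, B.Liftable (M.lunit A)) ∧
    (∀ A, B.Liftable (M.runit A))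

/-- A braiding (a horizontal double braiding) on a horizontally monoidal double
category: a horizontal pseudonatural transformation with invertible 1-cell
components and two invertible hexagon modifications. -/
structure HorBraiding (M : PreDoubleCat.{u}) (MM : HorMonoidal M) : Type u where
  Phi : ∀ A X, M.Hor (MM.T.obj A X) (MM.T.obj X A)
  PhiInv : ∀ A X, M.Hor (MM.T.obj X A) (MM.T.obj A X)
  PhiIso₁ : ∀ A X, M.GlobIso (M.hComp (Phi A X) (PhiInv A X)) (M.hId (MM.T.obj A X))
  PhiIso₂ : ∀ A X, M.GlobIso (M.hComp (PhiInv A X) (Phi A X)) (M.hId (MM.T.obj X A))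
  PhiVer : ∀ {A A' X X' : M.Obj} (u : M.Ver A A') (v : M.Ver X X'),
      M.Sq (Phi A X) (Phi A' X') (MM.T.ver u v) (MM.T.ver v u)
  PhiHor : ∀ {A A' X X' : M.Obj} (f : M.Hor A A') (g : M.Hor X X'),
      M.GlobIso (M.hComp (MM.T.hor f g) (Phi A' X')) (M.hComp (Phi A X) (MM.T.hor g f))
  b₁ : ∀ A X Y,
      M.GlobIso
        (M.hComp (M.hComp (MM.assoc A X Y) (Phi A (MM.T.obj X Y))) (MM.assoc X Y A))
        (M.hComp (M.hComp (MM.T.hor (Phi A X) (M.hId Y)) (MM.assoc X A Y))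
          (MM.T.hor (M.hId X) (Phi A Y)))
  b₂ : ∀ A X Y,
      M.GlobIso
        (M.hComp (M.hComp (MM.assocInv A X Y) (Phi (MM.T.obj A X) Y)) (MM.assocInv Y A X))
        (M.hComp (M.hComp (MM.T.hor (M.hId A) (Phi X Y)) (MM.assocInv A Y X))
          (MM.T.hor (Phi A Y) (M.hId X)))

/-- A vertical double braiding on a vertically monoidal double category. -/
structure VerBraiding (M : PreDoubleCat.{u}) (MM : VerMonoidal M) : Type u where
  Phi : ∀ A X, M.Ver (MM.T.obj A X) (MM.T.obj X A)
  PhiIso : ∀ A X, M.VIso (Phi A X)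
  PhiSq : ∀ {A A' X X' : M.Obj} (f : M.Hor A A') (g : M.Hor X X'),
      M.Sq (MM.T.hor f g) (MM.T.hor g f) (Phi A X) (Phi A' X')
  PhiNat : ∀ {A A' X X' : M.Obj} (u : M.Ver A A') (v : M.Ver X X'),
      M.vComp (MM.T.ver u v) (Phi A' X') = M.vComp (Phi A X) (MM.T.ver v u)
  hex₁ : ∀ A X Y,
      M.vComp (MM.assoc A X Y) (M.vComp (Phi A (MM.T.obj X Y)) (MM.assoc X Y A)) =
        M.vComp (MM.T.ver (Phi A X) (M.vId Y))
          (M.vComp (MM.assoc X A Y) (MM.T.ver (M.vId X) (Phi A Y)))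
  hex₂ : ∀ A X Y,
      M.vComp ((MM.assocIso A X Y).inv)
          (M.vComp (Phi (MM.T.obj A X) Y) ((MM.assocIso Y A X).inv)) =
        M.vComp (MM.T.ver (M.vId A) (Phi X Y))
          (M.vComp ((MM.assocIso A Y X).inv) (MM.T.ver (Phi A Y) (M.vId X)))

/-- The inner half of the middle-four interchange built from a vertical braiding. -/
def VerMonoidal.mid4inner {B : PreDoubleCat.{u}} (MM : VerMonoidal B) (Φ : VerBraiding B MM)
    (X Y Z : B.Obj) :
    B.Ver (MM.T.obj X (MM.T.obj Y Z)) (MM.T.obj Y (MM.T.obj X Z)) :=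
  B.vComp ((MM.assocIso X Y Z).inv)
    (B.vComp (MM.T.ver (Φ.Phi X Y) (B.vId Z)) (MM.assoc Y X Z))

/-- The middle-four interchange `(A⊗X)⊗(Y⊗Z) → (A⊗Y)⊗(X⊗Z)` built from a
vertical braiding. -/
def VerMonoidal.mid4 {B : PreDoubleCat.{u}} (MM : VerMonoidal B) (Φ : VerBraiding B MM)
    (A X Y Z : B.Obj) :
    B.Ver (MM.T.obj (MM.T.obj A X) (MM.T.obj Y Z)) (MM.T.obj (MM.T.obj A Y) (MM.T.obj X Z)) :=
  B.vComp (MM.assoc A X (MM.T.obj Y Z))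
    (B.vComp (MM.T.ver (B.vId A) (MM.mid4inner Φ X Y Z))
      ((MM.assocIso A Y (MM.T.obj X Z)).inv))

/-- The middle-four interchange `(A⊗X)⊗(Y⊗Z) → (A⊗Y)⊗(X⊗Z)` built from a
horizontal braiding. -/
def HorMonoidal.mid4 {B : PreDoubleCat.{u}} (MM : HorMonoidal B) (Φ : HorBraiding B MM)
    (A X Y Z : B.Obj) :
    B.Hor (MM.T.obj (MM.T.obj A X) (MM.T.obj Y Z)) (MM.T.obj (MM.T.obj A Y) (MM.T.obj X Z)) :=
  B.hComp (MM.assoc A X (MM.T.obj Y Z))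
    (B.hComp
      (MM.T.hor (B.hId A)
        (B.hComp (MM.assocInv X Y Z)
          (B.hComp (MM.T.hor (Φ.Phi X Y) (B.hId Z)) (MM.assoc Y X Z))))
      (MM.assocInv A Y (MM.T.obj X Z)))

/-- A binoidal structure on a double category: pseudodouble functors `A ⋉ −`
and `− ⋊ B` agreeing on objects (`bow`). -/
structure Binoidal (B : PreDoubleCat.{u}) : Type u where
  bow : B.Obj → B.Obj → B.Obj
  lHor : ∀ (A : B.Obj) {X Y : B.Obj}, B.Hor X Y → B.Hor (bow A X) (bow A Y)
  lVer : ∀ (A : B.Obj) {X Y : B.Obj}, B.Ver X Y → B.Ver (bow A X) (bow A Y)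
  lSq : ∀ (A : B.Obj) {X₁ X₂ X₃ X₄ : B.Obj} {f : B.Hor X₁ X₂} {g : B.Hor X₃ X₄}
      {u : B.Ver X₁ X₃} {v : B.Ver X₂ X₄},
      B.Sq f g u v → B.Sq (lHor A f) (lHor A g) (lVer A u) (lVer A v)
  lVer_id : ∀ A X, lVer A (B.vId X) = B.vId (bow A X)
  lVer_comp : ∀ (A : B.Obj) {X₁ X₂ X₃ : B.Obj} (u : B.Ver X₁ X₂) (v : B.Ver X₂ X₃),
      lVer A (B.vComp u v) = B.vComp (lVer A u) (lVer A v)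
  lComp : ∀ (A : B.Obj) {X₁ X₂ X₃ : B.Obj} (f : B.Hor X₁ X₂) (g : B.Hor X₂ X₃),
      B.GlobIso (B.hComp (lHor A f) (lHor A g)) (lHor A (B.hComp f g))
  lUnit : ∀ A X, B.GlobIso (B.hId (bow A X)) (lHor A (B.hId X))
  rHor : ∀ {X Y : B.Obj} (f : B.Hor X Y) (A : B.Obj), B.Hor (bow X A) (bow Y A)
  rVer : ∀ {X Y : B.Obj} (u : B.Ver X Y) (A : B.Obj), B.Ver (bow X A) (bow Y A)
  rSq : ∀ {X₁ X₂ X₃ X₄ : B.Obj} {f : B.Hor X₁ X₂} {g : B.Hor X₃ X₄}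
      {u : B.Ver X₁ X₃} {v : B.Ver X₂ X₄} (A : B.Obj),
      B.Sq f g u v → B.Sq (rHor f A) (rHor g A) (rVer u A) (rVer v A)
  rVer_id : ∀ X A, rVer (B.vId X) A = B.vId (bow X A)
  rVer_comp : ∀ {X₁ X₂ X₃ : B.Obj} (u : B.Ver X₁ X₂) (v : B.Ver X₂ X₃) (A : B.Obj),
      rVer (B.vComp u v) A = B.vComp (rVer u A) (rVer v A)
  rComp : ∀ {X₁ X₂ X₃ : B.Obj} (f : B.Hor X₁ X₂) (g : B.Hor X₂ X₃) (A : B.Obj),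
      B.GlobIso (B.hComp (rHor f A) (rHor g A)) (rHor (B.hComp f g) A)
  rUnit : ∀ X A, B.GlobIso (B.hId (bow X A)) (rHor (B.hId X) A)

/-- Centrality data for a horizontal 1-cell of a binoidal double category:
a horizontal pseudonatural transformation `f ⋉ −` (left centrality) and a
horizontal pseudonatural transformation `− ⋊ f` (right centrality). -/
structure CentralH (B : PreDoubleCat.{u}) (bi : Binoidal B) {A A' : B.Obj}
    (f : B.Hor A A') : Type u where
  lslide : ∀ {X Y : B.Obj} (g : B.Hor X Y),
      B.GlobIso (B.hComp (bi.lHor A g) (bi.rHor f Y)) (B.hComp (bi.rHor f X) (bi.lHor A' g))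
  lslideV : ∀ {X X' : B.Obj} (u : B.Ver X X'),
      B.Sq (bi.rHor f X) (bi.rHor f X') (bi.lVer A u) (bi.lVer A' u)
  rslide : ∀ {X Y : B.Obj} (g : B.Hor X Y),
      B.GlobIso (B.hComp (bi.rHor g A) (bi.lHor Y f)) (B.hComp (bi.lHor X f) (bi.rHor g A'))
  rslideV : ∀ {X X' : B.Obj} (u : B.Ver X X'),
      B.Sq (bi.lHor X f) (bi.lHor X' f) (bi.rVer u A) (bi.rVer u A')

/-- Centrality data for a vertical 1-cell of a binoidal double category:
vertical pseudonatural transformations `v ⋉ −` and `− ⋊ v`. -/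
structure CentralV (B : PreDoubleCat.{u}) (bi : Binoidal B) {A A' : B.Obj}
    (v : B.Ver A A') : Type u where
  lslide : ∀ {X Y : B.Obj} (g : B.Hor X Y),
      B.Sq (bi.lHor A g) (bi.lHor A' g) (bi.rVer v X) (bi.rVer v Y)
  rslide : ∀ {X Y : B.Obj} (g : B.Hor X Y),
      B.Sq (bi.rHor g A) (bi.rHor g A') (bi.lVer X v) (bi.lVer Y v)

/-- A horizontally premonoidal structure over a given binoidal structure:
unit, central horizontal equivalence constraints, and modification data. -/
structure HorPremonoidalOver (B : PreDoubleCat.{u}) (bi : Binoidal B) : Type u where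
  unit : B.Obj
  assoc : ∀ A X Y, B.Hor (bi.bow (bi.bow A X) Y) (bi.bow A (bi.bow X Y))
  assocEquiv : ∀ A X Y,
      ∃ e : B.HEquiv (bi.bow (bi.bow A X) Y) (bi.bow A (bi.bow X Y)), e.fwd = assoc A X Y
  lunit : ∀ A, B.Hor (bi.bow unit A) A
  lunitEquiv : ∀ A, ∃ e : B.HEquiv (bi.bow unit A) A, e.fwd = lunit A
  runit : ∀ A, B.Hor (bi.bow A unit) A
  runitEquiv : ∀ A, ∃ e : B.HEquiv (bi.bow A unit) A, e.fwd = runit A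
  assocCentral : ∀ A X Y, CentralH B bi (assoc A X Y)
  lunitCentral : ∀ A, CentralH B bi (lunit A)
  runitCentral : ∀ A, CentralH B bi (runit A)
  assocNat₁ : ∀ {A A' : B.Obj} (f : B.Hor A A') (X Y : B.Obj),
      B.GlobIso (B.hComp (bi.rHor (bi.rHor f X) Y) (assoc A' X Y))
        (B.hComp (assoc A X Y) (bi.rHor f (bi.bow X Y)))
  assocNat₂ : ∀ (A : B.Obj) {X X' : B.Obj} (g : B.Hor X X') (Y : B.Obj),
      B.GlobIso (B.hComp (bi.rHor (bi.lHor A g) Y) (assoc A X' Y))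
        (B.hComp (assoc A X Y) (bi.lHor A (bi.rHor g Y)))
  assocNat₃ : ∀ (A X : B.Obj) {Y Y' : B.Obj} (h : B.Hor Y Y'),
      B.GlobIso (B.hComp (bi.lHor (bi.bow A X) h) (assoc A X Y'))
        (B.hComp (assoc A X Y) (bi.lHor A (bi.lHor X h)))
  lunitNat : ∀ {X Y : B.Obj} (g : B.Hor X Y),
      B.GlobIso (B.hComp (bi.lHor unit g) (lunit Y)) (B.hComp (lunit X) g)
  runitNat : ∀ {X Y : B.Obj} (g : B.Hor X Y),
      B.GlobIso (B.hComp (bi.rHor g unit) (runit Y)) (B.hComp (runit X) g)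
  pMod : ∀ A X Y Z,
      B.GlobIso
        (B.hComp (B.hComp (bi.rHor (assoc A X Y) Z) (assoc A (bi.bow X Y) Z))
          (bi.lHor A (assoc X Y Z)))
        (B.hComp (assoc (bi.bow A X) Y Z) (assoc A X (bi.bow Y Z)))
  mMod : ∀ A X,
      B.GlobIso (B.hComp (assoc A unit X) (bi.lHor A (lunit X))) (bi.rHor (runit A) X)
  lMod : ∀ A X,
      B.GlobIso (bi.rHor (lunit A) X) (B.hComp (assoc unit A X) (lunit (bi.bow A X)))
  rMod : ∀ A X,
      B.GlobIso (runit (bi.bow A X)) (B.hComp (assoc A X unit) (bi.lHor A (runit X)))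

/-- A horizontally premonoidal double category. -/
structure HorPremonoidal (B : PreDoubleCat.{u}) : Type u where
  bi : Binoidal B
  str : HorPremonoidalOver B bi

/-- A vertically premonoidal structure over a binoidal structure: the
constraints are invertible vertical strict transformations with central
components and the modifications are identities (equations). -/
structure VerPremonoidalOver (B : PreDoubleCat.{u}) (bi : Binoidal B) : Type u where
  unit : B.Obj
  assoc : ∀ A X Y, B.Ver (bi.bow (bi.bow A X) Y) (bi.bow A (bi.bow X Y))
  assocIso : ∀ A X Y, B.VIso (assoc A X Y)
  lunit : ∀ A, B.Ver (bi.bow unit A) A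
  lunitIso : ∀ A, B.VIso (lunit A)
  runit : ∀ A, B.Ver (bi.bow A unit) A
  runitIso : ∀ A, B.VIso (runit A)
  assocCentral : ∀ A X Y, CentralV B bi (assoc A X Y)
  lunitCentral : ∀ A, CentralV B bi (lunit A)
  runitCentral : ∀ A, CentralV B bi (runit A)
  assocSq₁ : ∀ {A A' : B.Obj} (f : B.Hor A A') (X Y : B.Obj),
      B.Sq (bi.rHor (bi.rHor f X) Y) (bi.rHor f (bi.bow X Y)) (assoc A X Y) (assoc A' X Y)
  assocSq₂ : ∀ (A : B.Obj) {X X' : B.Obj} (g : B.Hor X X') (Y : B.Obj),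
      B.Sq (bi.rHor (bi.lHor A g) Y) (bi.lHor A (bi.rHor g Y)) (assoc A X Y) (assoc A X' Y)
  assocSq₃ : ∀ (A X : B.Obj) {Y Y' : B.Obj} (h : B.Hor Y Y'),
      B.Sq (bi.lHor (bi.bow A X) h) (bi.lHor A (bi.lHor X h)) (assoc A X Y) (assoc A X Y')
  lunitSq : ∀ {X Y : B.Obj} (g : B.Hor X Y),
      B.Sq (bi.lHor unit g) g (lunit X) (lunit Y)
  runitSq : ∀ {X Y : B.Obj} (g : B.Hor X Y),
      B.Sq (bi.rHor g unit) g (runit X) (runit Y)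
  pentagon : ∀ A X Y Z,
      B.vComp (assoc (bi.bow A X) Y Z) (assoc A X (bi.bow Y Z)) =
        B.vComp (B.vComp (bi.rVer (assoc A X Y) Z) (assoc A (bi.bow X Y) Z))
          (bi.lVer A (assoc X Y Z))
  tri_m : ∀ A X, B.vComp (assoc A unit X) (bi.lVer A (lunit X)) = bi.rVer (runit A) X
  tri_l : ∀ A X, bi.rVer (lunit A) X = B.vComp (assoc unit A X) (lunit (bi.bow A X))
  tri_r : ∀ A X, runit (bi.bow A X) = B.vComp (assoc A X unit) (bi.lVer A (runit X))

/-- A vertically premonoidal structure is liftable when all the components of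
its constraints have companions. -/
def VerPremonoidalOver.IsLiftable {B : PreDoubleCat.{u}} {bi : Binoidal B}
    (V : VerPremonoidalOver B bi) : Prop :=
  (∀ A X Y, B.Liftable (V.assoc A X Y)) ∧ (∀ A, B.Liftable (V.lunit A)) ∧
    (∀ A, B.Liftable (V.runit A))

/-- A pseudodouble quasi-functor (binary): a binoidal structure together with
the four families of interchange 2-cells `(k,K)`, `(u,K)`, `(k,U)`, `(u,U)`. -/
structure QuasiFunctor (B : PreDoubleCat.{u}) extends Binoidal B where
  hh : ∀ {X X' A A' : B.Obj} (k : B.Hor X X') (K : B.Hor A A'),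
      B.Glob (B.hComp (rHor k A) (lHor X' K)) (B.hComp (lHor X K) (rHor k A'))
  vh : ∀ {X X' A A' : B.Obj} (u : B.Ver X X') (K : B.Hor A A'),
      B.Sq (lHor X K) (lHor X' K) (rVer u A) (rVer u A')
  hv : ∀ {X X' A A' : B.Obj} (k : B.Hor X X') (U : B.Ver A A'),
      B.Sq (rHor k A) (rHor k A') (lVer X U) (lVer X' U)
  vv : ∀ {X X' A A' : B.Obj} (u : B.Ver X X') (U : B.Ver A A'),
      B.Sq (B.hId (bow X A)) (B.hId (bow X' A'))
        (B.vComp (lVer X U) (rVer u A')) (B.vComp (rVer u A) (lVer X' U))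

/-- The interchange 2-cells `(u,U)` of a quasi-functor are trivial (identities). -/
def QuasiFunctor.TrivialVV {B : PreDoubleCat.{u}} (Q : QuasiFunctor B) : Prop :=
  ∀ {X X' A A' : B.Obj} (u : B.Ver X X') (U : B.Ver A A'),
    ∃ _ : B.vComp (Q.lVer X U) (Q.rVer u A') = B.vComp (Q.rVer u A) (Q.lVer X' U),
      HEq (Q.vv u U) (B.sqIdV (B.vComp (Q.lVer X U) (Q.rVer u A')))

/-- A horizontal lax action of a horizontally monoidal double category `M`
(with unit `J = MM.unit`) on a double category `D`: a pseudodouble functor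
`⊗̄ : M × D → D` together with horizontal transformations
`β : −⊗̄(−⊗̄−) ⇒ (−⊗−)⊗̄−` and `ν : Id ⇒ J⊗̄−` and the modification data
`p̃`, `l̃`, `m̃`. -/
structure HorLaxAction (M D : PreDoubleCat.{u}) (MM : HorMonoidal M) : Type u where
  act : M.Obj → D.Obj → D.Obj
  actHor : ∀ {M₁ M₂ : M.Obj} {A B : D.Obj},
      M.Hor M₁ M₂ → D.Hor A B → D.Hor (act M₁ A) (act M₂ B)
  actVer : ∀ {M₁ M₂ : M.Obj} {A B : D.Obj},
      M.Ver M₁ M₂ → D.Ver A B → D.Ver (act M₁ A) (act M₂ B)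
  actSq : ∀ {M₁ M₂ M₃ M₄ : M.Obj} {A₁ A₂ A₃ A₄ : D.Obj}
      {m : M.Hor M₁ M₂} {n : M.Hor M₃ M₄} {μ : M.Ver M₁ M₃} {ν₀ : M.Ver M₂ M₄}
      {f : D.Hor A₁ A₂} {g : D.Hor A₃ A₄} {u : D.Ver A₁ A₃} {v : D.Ver A₂ A₄},
      M.Sq m n μ ν₀ → D.Sq f g u v →
      D.Sq (actHor m f) (actHor n g) (actVer μ u) (actVer ν₀ v)
  actVer_id : ∀ (M₁ : M.Obj) (A : D.Obj), actVer (M.vId M₁) (D.vId A) = D.vId (act M₁ A)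
  actVer_comp : ∀ {M₁ M₂ M₃ : M.Obj} {A₁ A₂ A₃ : D.Obj}
      (m : M.Ver M₁ M₂) (n : M.Ver M₂ M₃) (u : D.Ver A₁ A₂) (v : D.Ver A₂ A₃),
      actVer (M.vComp m n) (D.vComp u v) = D.vComp (actVer m u) (actVer n v)
  actComp : ∀ {M₁ M₂ M₃ : M.Obj} {A₁ A₂ A₃ : D.Obj}
      (m : M.Hor M₁ M₂) (n : M.Hor M₂ M₃) (f : D.Hor A₁ A₂) (g : D.Hor A₂ A₃),
      D.GlobIso (D.hComp (actHor m f) (actHor n g)) (actHor (M.hComp m n) (D.hComp f g))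
  actUnit : ∀ (M₁ : M.Obj) (A : D.Obj),
      D.GlobIso (D.hId (act M₁ A)) (actHor (M.hId M₁) (D.hId A))
  β : ∀ (M₁ N₁ : M.Obj) (A : D.Obj),
      D.Hor (act M₁ (act N₁ A)) (act (MM.T.obj M₁ N₁) A)
  βVer : ∀ {M₁ M₂ N₁ N₂ : M.Obj} {A B : D.Obj}
      (m : M.Ver M₁ M₂) (n : M.Ver N₁ N₂) (w : D.Ver A B),
      D.Sq (β M₁ N₁ A) (β M₂ N₂ B) (actVer m (actVer n w)) (actVer (MM.T.ver m n) w)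
  βHor : ∀ {M₁ M₂ N₁ N₂ : M.Obj} {A B : D.Obj}
      (m : M.Hor M₁ M₂) (n : M.Hor N₁ N₂) (f : D.Hor A B),
      D.GlobIso (D.hComp (actHor m (actHor n f)) (β M₂ N₂ B))
        (D.hComp (β M₁ N₁ A) (actHor (MM.T.hor m n) f))
  ν : ∀ A : D.Obj, D.Hor A (act MM.unit A)
  νVer : ∀ {A B : D.Obj} (u : D.Ver A B), D.Sq (ν A) (ν B) u (actVer (M.vId MM.unit) u)
  νHor : ∀ {A B : D.Obj} (f : D.Hor A B),
      D.GlobIso (D.hComp f (ν B)) (D.hComp (ν A) (actHor (M.hId MM.unit) f))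
  pMod : ∀ (M₁ N₁ P₁ : M.Obj) (A : D.Obj),
      D.GlobIso
        (D.hComp (actHor (M.hId M₁) (β N₁ P₁ A)) (β M₁ (MM.T.obj N₁ P₁) A))
        (D.hComp (D.hComp (β M₁ N₁ (act P₁ A)) (β (MM.T.obj M₁ N₁) P₁ A))
          (actHor (MM.assoc M₁ N₁ P₁) (D.hId A)))
  lMod : ∀ (M₁ : M.Obj) (A : D.Obj),
      D.GlobIso
        (D.hComp (ν (act M₁ A)) (D.hComp (β MM.unit M₁ A) (actHor (MM.lunit M₁) (D.hId A))))
        (D.hId (act M₁ A))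
  mMod : ∀ (M₁ : M.Obj) (A : D.Obj),
      D.GlobIso
        (D.hComp (actHor (M.hId M₁) (ν A))
          (D.hComp (β M₁ MM.unit A) (actHor (MM.runit M₁) (D.hId A))))
        (D.hId (act M₁ A))

/-- A horizontal action (a horizontal lax action whose structure
transformations `β` and `ν` are equivalences). -/
structure HorAction (M D : PreDoubleCat.{u}) (MM : HorMonoidal M)
    extends HorLaxAction M D MM where
  βInv : ∀ (M₁ N₁ : M.Obj) (A : D.Obj),
      D.Hor (act (MM.T.obj M₁ N₁) A) (act M₁ (act N₁ A))
  βIso₁ : ∀ M₁ N₁ A,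
      D.GlobIso (D.hComp (β M₁ N₁ A) (βInv M₁ N₁ A)) (D.hId (act M₁ (act N₁ A)))
  βIso₂ : ∀ M₁ N₁ A,
      D.GlobIso (D.hComp (βInv M₁ N₁ A) (β M₁ N₁ A)) (D.hId (act (MM.T.obj M₁ N₁) A))
  νInv : ∀ A : D.Obj, D.Hor (act MM.unit A) A
  νIso₁ : ∀ A, D.GlobIso (D.hComp (ν A) (νInv A)) (D.hId A)
  νIso₂ : ∀ A, D.GlobIso (D.hComp (νInv A) (ν A)) (D.hId (act MM.unit A))

/-- A vertical lax action of a vertically monoidal double category on a double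
category: `β` and `ν` are vertical strict transformations and `p̃`, `l̃`, `m̃`
are identity vertical modifications (equations). -/
structure VerLaxAction (M D : PreDoubleCat.{u}) (MM : VerMonoidal M) : Type u where
  act : M.Obj → D.Obj → D.Obj
  actHor : ∀ {M₁ M₂ : M.Obj} {A B : D.Obj},
      M.Hor M₁ M₂ → D.Hor A B → D.Hor (act M₁ A) (act M₂ B)
  actVer : ∀ {M₁ M₂ : M.Obj} {A B : D.Obj},
      M.Ver M₁ M₂ → D.Ver A B → D.Ver (act M₁ A) (act M₂ B)
  actSq : ∀ {M₁ M₂ M₃ M₄ : M.Obj} {A₁ A₂ A₃ A₄ : D.Obj}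
      {m : M.Hor M₁ M₂} {n : M.Hor M₃ M₄} {μ : M.Ver M₁ M₃} {ν₀ : M.Ver M₂ M₄}
      {f : D.Hor A₁ A₂} {g : D.Hor A₃ A₄} {u : D.Ver A₁ A₃} {v : D.Ver A₂ A₄},
      M.Sq m n μ ν₀ → D.Sq f g u v →
      D.Sq (actHor m f) (actHor n g) (actVer μ u) (actVer ν₀ v)
  actVer_id : ∀ (M₁ : M.Obj) (A : D.Obj), actVer (M.vId M₁) (D.vId A) = D.vId (act M₁ A)
  actVer_comp : ∀ {M₁ M₂ M₃ : M.Obj} {A₁ A₂ A₃ : D.Obj}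
      (m : M.Ver M₁ M₂) (n : M.Ver M₂ M₃) (u : D.Ver A₁ A₂) (v : D.Ver A₂ A₃),
      actVer (M.vComp m n) (D.vComp u v) = D.vComp (actVer m u) (actVer n v)
  actComp : ∀ {M₁ M₂ M₃ : M.Obj} {A₁ A₂ A₃ : D.Obj}
      (m : M.Hor M₁ M₂) (n : M.Hor M₂ M₃) (f : D.Hor A₁ A₂) (g : D.Hor A₂ A₃),
      D.GlobIso (D.hComp (actHor m f) (actHor n g)) (actHor (M.hComp m n) (D.hComp f g))
  actUnit : ∀ (M₁ : M.Obj) (A : D.Obj),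
      D.GlobIso (D.hId (act M₁ A)) (actHor (M.hId M₁) (D.hId A))
  β : ∀ (M₁ N₁ : M.Obj) (A : D.Obj),
      D.Ver (act M₁ (act N₁ A)) (act (MM.T.obj M₁ N₁) A)
  βSq : ∀ {M₁ M₂ N₁ N₂ : M.Obj} {A B : D.Obj}
      (m : M.Hor M₁ M₂) (n : M.Hor N₁ N₂) (f : D.Hor A B),
      D.Sq (actHor m (actHor n f)) (actHor (MM.T.hor m n) f) (β M₁ N₁ A) (β M₂ N₂ B)
  βNat : ∀ {M₁ M₂ N₁ N₂ : M.Obj} {A B : D.Obj}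
      (m : M.Ver M₁ M₂) (n : M.Ver N₁ N₂) (w : D.Ver A B),
      D.vComp (actVer m (actVer n w)) (β M₂ N₂ B) =
        D.vComp (β M₁ N₁ A) (actVer (MM.T.ver m n) w)
  ν : ∀ A : D.Obj, D.Ver A (act MM.unit A)
  νSq : ∀ {A B : D.Obj} (f : D.Hor A B),
      D.Sq f (actHor (M.hId MM.unit) f) (ν A) (ν B)
  νNat : ∀ {A B : D.Obj} (u : D.Ver A B),
      D.vComp u (ν B) = D.vComp (ν A) (actVer (M.vId MM.unit) u)
  pMod : ∀ (M₁ N₁ P₁ : M.Obj) (A : D.Obj),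
      D.vComp (actVer (M.vId M₁) (β N₁ P₁ A)) (β M₁ (MM.T.obj N₁ P₁) A) =
        D.vComp (β M₁ N₁ (act P₁ A))
          (D.vComp (β (MM.T.obj M₁ N₁) P₁ A) (actVer (MM.assoc M₁ N₁ P₁) (D.vId A)))
  lMod : ∀ (M₁ : M.Obj) (A : D.Obj),
      D.vComp (ν (act M₁ A))
          (D.vComp (β MM.unit M₁ A) (actVer (MM.lunit M₁) (D.vId A))) =
        D.vId (act M₁ A)
  mMod : ∀ (M₁ : M.Obj) (A : D.Obj),
      D.vComp (actVer (M.vId M₁) (ν A))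
          (D.vComp (β M₁ MM.unit A) (actVer (MM.runit M₁) (D.vId A))) =
        D.vId (act M₁ A)

/-- A left horizontal strength on a horizontal lax action, with components
`t^M_{A,X} : A ⊗ (M ⊗̄ X) → M ⊗̄ (A ⊗ X)` and the invertible modifications
`x`, `y` (compatibility with the monoidal structure of `D`) and `w`, `z`
(compatibility with the action structure `β`, `ν`). -/
structure LeftHorStrength {M D : PreDoubleCat.{u}} (MM : HorMonoidal M) (DD : HorMonoidal D)
    (σ : HorLaxAction M D MM) : Type u where
  t : ∀ (M₁ : M.Obj) (A X : D.Obj),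
      D.Hor (DD.T.obj A (σ.act M₁ X)) (σ.act M₁ (DD.T.obj A X))
  tVer : ∀ {M₁ M₂ : M.Obj} {A B X Y : D.Obj} (m : M.Ver M₁ M₂) (u : D.Ver A B)
      (v : D.Ver X Y),
      D.Sq (t M₁ A X) (t M₂ B Y) (DD.T.ver u (σ.actVer m v)) (σ.actVer m (DD.T.ver u v))
  tHor : ∀ {M₁ M₂ : M.Obj} {A B X Y : D.Obj} (m : M.Hor M₁ M₂) (f : D.Hor A B)
      (g : D.Hor X Y),
      D.GlobIso (D.hComp (DD.T.hor f (σ.actHor m g)) (t M₂ B Y))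
        (D.hComp (t M₁ A X) (σ.actHor m (DD.T.hor f g)))
  x : ∀ (M₁ : M.Obj) (X : D.Obj),
      D.GlobIso (D.hComp (t M₁ DD.unit X) (σ.actHor (M.hId M₁) (DD.lunit X)))
        (DD.lunit (σ.act M₁ X))
  y : ∀ (M₁ : M.Obj) (A X Y : D.Obj),
      D.GlobIso
        (D.hComp (t M₁ (DD.T.obj A X) Y) (σ.actHor (M.hId M₁) (DD.assoc A X Y)))
        (D.hComp (D.hComp (DD.assoc A X (σ.act M₁ Y)) (DD.T.hor (D.hId A) (t M₁ X Y)))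
          (t M₁ A (DD.T.obj X Y)))
  w : ∀ (M₁ N₁ : M.Obj) (A X : D.Obj),
      D.GlobIso
        (D.hComp (D.hComp (t M₁ A (σ.act N₁ X)) (σ.actHor (M.hId M₁) (t N₁ A X)))
          (σ.β M₁ N₁ (DD.T.obj A X)))
        (D.hComp (DD.T.hor (D.hId A) (σ.β M₁ N₁ X)) (t (MM.T.obj M₁ N₁) A X))
  z : ∀ (A X : D.Obj),
      D.GlobIso (D.hComp (DD.T.hor (D.hId A) (σ.ν X)) (t MM.unit A X))
        (σ.ν (DD.T.obj A X))

/-- A right horizontal strength on a horizontal lax action, with components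
`s^M_{A,X} : (M ⊗̄ A) ⊗ X → M ⊗̄ (A ⊗ X)`. -/
structure RightHorStrength {M D : PreDoubleCat.{u}} (MM : HorMonoidal M) (DD : HorMonoidal D)
    (σ : HorLaxAction M D MM) : Type u where
  s : ∀ (M₁ : M.Obj) (A X : D.Obj),
      D.Hor (DD.T.obj (σ.act M₁ A) X) (σ.act M₁ (DD.T.obj A X))
  sVer : ∀ {M₁ M₂ : M.Obj} {A B X Y : D.Obj} (m : M.Ver M₁ M₂) (u : D.Ver A B)
      (v : D.Ver X Y),
      D.Sq (s M₁ A X) (s M₂ B Y) (DD.T.ver (σ.actVer m u) v) (σ.actVer m (DD.T.ver u v))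
  sHor : ∀ {M₁ M₂ : M.Obj} {A B X Y : D.Obj} (m : M.Hor M₁ M₂) (f : D.Hor A B)
      (g : D.Hor X Y),
      D.GlobIso (D.hComp (DD.T.hor (σ.actHor m f) g) (s M₂ B Y))
        (D.hComp (s M₁ A X) (σ.actHor m (DD.T.hor f g)))
  xr : ∀ (M₁ : M.Obj) (A : D.Obj),
      D.GlobIso (D.hComp (s M₁ A DD.unit) (σ.actHor (M.hId M₁) (DD.runit A)))
        (DD.runit (σ.act M₁ A))
  yr : ∀ (M₁ : M.Obj) (A X Y : D.Obj),
      D.GlobIso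
        (D.hComp (DD.T.hor (s M₁ A X) (D.hId Y))
          (D.hComp (s M₁ (DD.T.obj A X) Y) (σ.actHor (M.hId M₁) (DD.assoc A X Y))))
        (D.hComp (DD.assoc (σ.act M₁ A) X Y) (s M₁ A (DD.T.obj X Y)))
  wr : ∀ (M₁ N₁ : M.Obj) (A X : D.Obj),
      D.GlobIso
        (D.hComp (D.hComp (s M₁ (σ.act N₁ A) X) (σ.actHor (M.hId M₁) (s N₁ A X)))
          (σ.β M₁ N₁ (DD.T.obj A X)))
        (D.hComp (DD.T.hor (σ.β M₁ N₁ A) (D.hId X)) (s (MM.T.obj M₁ N₁) A X))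
  zr : ∀ (A X : D.Obj),
      D.GlobIso (D.hComp (DD.T.hor (σ.ν A) (D.hId X)) (s MM.unit A X))
        (σ.ν (DD.T.obj A X))

/-- A bistrong horizontal lax action: a left and a right horizontal strength
together with the invertible bistrength modification `q`. -/
structure HorBistrong {M D : PreDoubleCat.{u}} (MM : HorMonoidal M) (DD : HorMonoidal D)
    (σ : HorLaxAction M D MM) : Type u where
  left : LeftHorStrength MM DD σ
  right : RightHorStrength MM DD σ
  q : ∀ (M₁ : M.Obj) (A X Y : D.Obj),
      D.GlobIso
        (D.hComp (D.hComp (DD.assoc A (σ.act M₁ X) Y) (DD.T.hor (D.hId A) (right.s M₁ X Y)))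
          (left.t M₁ A (DD.T.obj X Y)))
        (D.hComp (D.hComp (DD.T.hor (left.t M₁ A X) (D.hId Y)) (right.s M₁ (DD.T.obj A X) Y))
          (σ.actHor (M.hId M₁) (DD.assoc A X Y)))

/-- A bistrong and commutative horizontal lax action: a bistrong structure
together with the invertible commutativity modification `c` built using the
braiding of `M`. -/
structure HorBistrongCommutative {M D : PreDoubleCat.{u}} (MM : HorMonoidal M)
    (DD : HorMonoidal D) (σ : HorLaxAction M D MM) (Φ : HorBraiding M MM)
    extends HorBistrong MM DD σ : Type u where
  c : ∀ (M₁ N₁ : M.Obj) (A X : D.Obj),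
      D.GlobIso
        (D.hComp (D.hComp (right.s M₁ A (σ.act N₁ X)) (σ.actHor (M.hId M₁) (left.t N₁ A X)))
          (σ.β M₁ N₁ (DD.T.obj A X)))
        (D.hComp
          (D.hComp (D.hComp (left.t N₁ (σ.act M₁ A) X) (σ.actHor (M.hId N₁) (right.s M₁ A X)))
            (σ.β N₁ M₁ (DD.T.obj A X)))
          (σ.actHor (Φ.Phi N₁ M₁) (D.hId (DD.T.obj A X))))

/-- A lax monoidal structure on a horizontal lax action: the action
pseudofunctor is horizontally lax monoidal (interchangers `F2`, unit cell `F0`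
and invertible modifications `ω`, `δ`, `γ`), and `β`, `ν` are monoidal
horizontal transformations with invertible structure modifications
`β²`, `β⁰`, `ν²`, `ν⁰`. -/
structure LaxMonoidalHorAction {M D : PreDoubleCat.{u}} (MM : HorMonoidal M)
    (DD : HorMonoidal D) (σ : HorLaxAction M D MM) (Φ : HorBraiding M MM) : Type u where
  F2 : ∀ (M₁ : M.Obj) (A : D.Obj) (N₁ : M.Obj) (X : D.Obj),
      D.Hor (DD.T.obj (σ.act M₁ A) (σ.act N₁ X)) (σ.act (MM.T.obj M₁ N₁) (DD.T.obj A X))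
  F2Ver : ∀ {M₁ M₂ N₁ N₂ : M.Obj} {A B X Y : D.Obj}
      (m : M.Ver M₁ M₂) (u : D.Ver A B) (n : M.Ver N₁ N₂) (v : D.Ver X Y),
      D.Sq (F2 M₁ A N₁ X) (F2 M₂ B N₂ Y)
        (DD.T.ver (σ.actVer m u) (σ.actVer n v))
        (σ.actVer (MM.T.ver m n) (DD.T.ver u v))
  F0 : D.Hor DD.unit (σ.act MM.unit DD.unit)
  omega : ∀ (M₁ N₁ P₁ : M.Obj) (A X Y : D.Obj),
      D.GlobIso
        (D.hComp
          (D.hComp (DD.T.hor (F2 M₁ A N₁ X) (D.hId (σ.act P₁ Y)))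
            (F2 (MM.T.obj M₁ N₁) (DD.T.obj A X) P₁ Y))
          (σ.actHor (MM.assoc M₁ N₁ P₁) (DD.assoc A X Y)))
        (D.hComp
          (D.hComp (DD.assoc (σ.act M₁ A) (σ.act N₁ X) (σ.act P₁ Y))
            (DD.T.hor (D.hId (σ.act M₁ A)) (F2 N₁ X P₁ Y)))
          (F2 M₁ A (MM.T.obj N₁ P₁) (DD.T.obj X Y)))
  delta : ∀ (M₁ : M.Obj) (A : D.Obj),
      D.GlobIso
        (D.hComp (D.hComp (DD.T.hor (D.hId (σ.act M₁ A)) F0) (F2 M₁ A MM.unit DD.unit))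
          (σ.actHor (MM.runit M₁) (DD.runit A)))
        (DD.runit (σ.act M₁ A))
  gamma : ∀ (M₁ : M.Obj) (A : D.Obj),
      D.GlobIso
        (D.hComp (D.hComp (DD.T.hor F0 (D.hId (σ.act M₁ A))) (F2 MM.unit DD.unit M₁ A))
          (σ.actHor (MM.lunit M₁) (DD.lunit A)))
        (DD.lunit (σ.act M₁ A))
  beta2 : ∀ (M₁ N₁ P₁ Q₁ : M.Obj) (A X : D.Obj),
      D.GlobIso
        (D.hComp
          (D.hComp (F2 M₁ (σ.act N₁ A) P₁ (σ.act Q₁ X))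
            (σ.actHor (M.hId (MM.T.obj M₁ P₁)) (F2 N₁ A Q₁ X)))
          (σ.β (MM.T.obj M₁ P₁) (MM.T.obj N₁ Q₁) (DD.T.obj A X)))
        (D.hComp
          (D.hComp (DD.T.hor (σ.β M₁ N₁ A) (σ.β P₁ Q₁ X))
            (F2 (MM.T.obj M₁ N₁) A (MM.T.obj P₁ Q₁) X))
          (σ.actHor (MM.mid4 Φ M₁ N₁ P₁ Q₁) (D.hId (DD.T.obj A X))))
  beta0 : D.GlobIso
      (D.hComp (D.hComp (D.hComp F0 (σ.actHor (M.hId MM.unit) F0))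
          (σ.β MM.unit MM.unit DD.unit))
        (σ.actHor (MM.lunit MM.unit) (D.hId DD.unit)))
      F0
  nu2 : ∀ (A X : D.Obj),
      D.GlobIso
        (D.hComp (D.hComp (DD.T.hor (σ.ν A) (σ.ν X)) (F2 MM.unit A MM.unit X))
          (σ.actHor (MM.lunit MM.unit) (D.hId (DD.T.obj A X))))
        (σ.ν (DD.T.obj A X))
  nu0 : D.GlobIso (σ.ν DD.unit) F0

/-- A left vertical strength on a vertical lax action: an invertible vertical
strict transformation `t` with identity compatibility modifications
`x`, `y`, `w`, `z` (equations). -/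
structure LeftVerStrength {M D : PreDoubleCat.{u}} (MM : VerMonoidal M) (DD : VerMonoidal D)
    (σ : VerLaxAction M D MM) : Type u where
  t : ∀ (M₁ : M.Obj) (A X : D.Obj),
      D.Ver (DD.T.obj A (σ.act M₁ X)) (σ.act M₁ (DD.T.obj A X))
  tIso : ∀ M₁ A X, D.VIso (t M₁ A X)
  tSq : ∀ {M₁ M₂ : M.Obj} {A B X Y : D.Obj} (m : M.Hor M₁ M₂) (f : D.Hor A B)
      (g : D.Hor X Y),
      D.Sq (DD.T.hor f (σ.actHor m g)) (σ.actHor m (DD.T.hor f g)) (t M₁ A X) (t M₂ B Y)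
  x : ∀ M₁ X,
      D.vComp (t M₁ DD.unit X) (σ.actVer (M.vId M₁) (DD.lunit X)) = DD.lunit (σ.act M₁ X)
  y : ∀ M₁ A X Y,
      D.vComp (t M₁ (DD.T.obj A X) Y) (σ.actVer (M.vId M₁) (DD.assoc A X Y)) =
        D.vComp (DD.assoc A X (σ.act M₁ Y))
          (D.vComp (DD.T.ver (D.vId A) (t M₁ X Y)) (t M₁ A (DD.T.obj X Y)))
  w : ∀ M₁ N₁ A X,
      D.vComp (DD.T.ver (D.vId A) (σ.β M₁ N₁ X)) (t (MM.T.obj M₁ N₁) A X) =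
        D.vComp (t M₁ A (σ.act N₁ X))
          (D.vComp (σ.actVer (M.vId M₁) (t N₁ A X)) (σ.β M₁ N₁ (DD.T.obj A X)))
  z : ∀ A X,
      σ.ν (DD.T.obj A X) = D.vComp (DD.T.ver (D.vId A) (σ.ν X)) (t MM.unit A X)

/-- A right vertical strength on a vertical lax action. -/
structure RightVerStrength {M D : PreDoubleCat.{u}} (MM : VerMonoidal M) (DD : VerMonoidal D)
    (σ : VerLaxAction M D MM) : Type u where
  s : ∀ (M₁ : M.Obj) (A X : D.Obj),
      D.Ver (DD.T.obj (σ.act M₁ A) X) (σ.act M₁ (DD.T.obj A X))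
  sIso : ∀ M₁ A X, D.VIso (s M₁ A X)
  sSq : ∀ {M₁ M₂ : M.Obj} {A B X Y : D.Obj} (m : M.Hor M₁ M₂) (f : D.Hor A B)
      (g : D.Hor X Y),
      D.Sq (DD.T.hor (σ.actHor m f) g) (σ.actHor m (DD.T.hor f g)) (s M₁ A X) (s M₂ B Y)
  xr : ∀ M₁ A,
      D.vComp (s M₁ A DD.unit) (σ.actVer (M.vId M₁) (DD.runit A)) = DD.runit (σ.act M₁ A)
  yr : ∀ M₁ A X Y,
      D.vComp (DD.T.ver (s M₁ A X) (D.vId Y))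
          (D.vComp (s M₁ (DD.T.obj A X) Y) (σ.actVer (M.vId M₁) (DD.assoc A X Y))) =
        D.vComp (DD.assoc (σ.act M₁ A) X Y) (s M₁ A (DD.T.obj X Y))
  wr : ∀ M₁ N₁ A X,
      D.vComp (DD.T.ver (σ.β M₁ N₁ A) (D.vId X)) (s (MM.T.obj M₁ N₁) A X) =
        D.vComp (s M₁ (σ.act N₁ A) X)
          (D.vComp (σ.actVer (M.vId M₁) (s N₁ A X)) (σ.β M₁ N₁ (DD.T.obj A X)))
  zr : ∀ A X,
      σ.ν (DD.T.obj A X) = D.vComp (DD.T.ver (σ.ν A) (D.vId X)) (s MM.unit A X)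

/-- A bistrong and commutative vertical lax action: left and right vertical
strengths together with the identity bistrength modification `q` and the
identity commutativity modification `c` (equations). -/
structure VerBistrongCommutative {M D : PreDoubleCat.{u}} (MM : VerMonoidal M)
    (DD : VerMonoidal D) (σ : VerLaxAction M D MM) (Φ : VerBraiding M MM) : Type u where
  left : LeftVerStrength MM DD σ
  right : RightVerStrength MM DD σ
  q : ∀ M₁ A X Y,
      D.vComp (DD.assoc A (σ.act M₁ X) Y)
          (D.vComp (DD.T.ver (D.vId A) (right.s M₁ X Y)) (left.t M₁ A (DD.T.obj X Y))) =
        D.vComp (DD.T.ver (left.t M₁ A X) (D.vId Y))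
          (D.vComp (right.s M₁ (DD.T.obj A X) Y) (σ.actVer (M.vId M₁) (DD.assoc A X Y)))
  c : ∀ M₁ N₁ A X,
      D.vComp (left.t N₁ (σ.act M₁ A) X)
          (D.vComp (σ.actVer (M.vId N₁) (right.s M₁ A X))
            (D.vComp (σ.β N₁ M₁ (DD.T.obj A X))
              (σ.actVer (Φ.Phi N₁ M₁) (D.vId (DD.T.obj A X))))) =
        D.vComp (right.s M₁ A (σ.act N₁ X))
          (D.vComp (σ.actVer (M.vId M₁) (left.t N₁ A X)) (σ.β M₁ N₁ (DD.T.obj A X)))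

/-- A lax monoidal structure on a vertical lax action: the action
pseudofunctor is a lax monoidal pseudodouble functor. -/
structure LaxMonoidalVerAction {M D : PreDoubleCat.{u}} (MM : VerMonoidal M)
    (DD : VerMonoidal D) (σ : VerLaxAction M D MM) : Type u where
  F2 : ∀ (M₁ : M.Obj) (A : D.Obj) (N₁ : M.Obj) (X : D.Obj),
      D.Ver (DD.T.obj (σ.act M₁ A) (σ.act N₁ X)) (σ.act (MM.T.obj M₁ N₁) (DD.T.obj A X))
  F2Sq : ∀ {M₁ M₂ N₁ N₂ : M.Obj} {A B X Y : D.Obj}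
      (m : M.Hor M₁ M₂) (f : D.Hor A B) (n : M.Hor N₁ N₂) (g : D.Hor X Y),
      D.Sq (DD.T.hor (σ.actHor m f) (σ.actHor n g)) (σ.actHor (MM.T.hor m n) (DD.T.hor f g))
        (F2 M₁ A N₁ X) (F2 M₂ B N₂ Y)
  F0 : D.Ver DD.unit (σ.act MM.unit DD.unit)
  assocLaw : ∀ (M₁ N₁ P₁ : M.Obj) (A X Y : D.Obj),
      D.vComp (DD.T.ver (F2 M₁ A N₁ X) (D.vId (σ.act P₁ Y)))
          (D.vComp (F2 (MM.T.obj M₁ N₁) (DD.T.obj A X) P₁ Y)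
            (σ.actVer (MM.assoc M₁ N₁ P₁) (DD.assoc A X Y))) =
        D.vComp (DD.assoc (σ.act M₁ A) (σ.act N₁ X) (σ.act P₁ Y))
          (D.vComp (DD.T.ver (D.vId (σ.act M₁ A)) (F2 N₁ X P₁ Y))
            (F2 M₁ A (MM.T.obj N₁ P₁) (DD.T.obj X Y)))
  lunitLaw : ∀ (M₁ : M.Obj) (A : D.Obj),
      D.vComp (DD.T.ver F0 (D.vId (σ.act M₁ A)))
          (D.vComp (F2 MM.unit DD.unit M₁ A) (σ.actVer (MM.lunit M₁) (DD.lunit A))) =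
        DD.lunit (σ.act M₁ A)
  runitLaw : ∀ (M₁ : M.Obj) (A : D.Obj),
      D.vComp (DD.T.ver (D.vId (σ.act M₁ A)) F0)
          (D.vComp (F2 M₁ A MM.unit DD.unit) (σ.actVer (MM.runit M₁) (DD.runit A))) =
        DD.runit (σ.act M₁ A)

/-- The cocycle modifications `β²`, `β⁰`, `ν²`, `ν⁰` of a lax monoidal vertical
lax action are trivial (identity vertical modifications). -/
def LaxMonoidalVerAction.TrivialCocycles {M D : PreDoubleCat.{u}} {MM : VerMonoidal M}
    {DD : VerMonoidal D} {σ : VerLaxAction M D MM} (Φ : VerBraiding M MM)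
    (S : LaxMonoidalVerAction MM DD σ) : Prop :=
  (∀ (M₁ N₁ P₁ Q₁ : M.Obj) (A X : D.Obj),
    D.vComp (S.F2 M₁ (σ.act N₁ A) P₁ (σ.act Q₁ X))
        (D.vComp (σ.actVer (M.vId (MM.T.obj M₁ P₁)) (S.F2 N₁ A Q₁ X))
          (σ.β (MM.T.obj M₁ P₁) (MM.T.obj N₁ Q₁) (DD.T.obj A X))) =
      D.vComp (DD.T.ver (σ.β M₁ N₁ A) (σ.β P₁ Q₁ X))
        (D.vComp (S.F2 (MM.T.obj M₁ N₁) A (MM.T.obj P₁ Q₁) X)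
          (σ.actVer (MM.mid4 Φ M₁ N₁ P₁ Q₁) (D.vId (DD.T.obj A X))))) ∧
  (D.vComp S.F0
      (D.vComp (σ.actVer (M.vId MM.unit) S.F0)
        (D.vComp (σ.β MM.unit MM.unit DD.unit)
          (σ.actVer (MM.lunit MM.unit) (D.vId DD.unit)))) = S.F0) ∧
  (∀ (A X : D.Obj),
    D.vComp (DD.T.ver (σ.ν A) (σ.ν X))
        (D.vComp (S.F2 MM.unit A MM.unit X)
          (σ.actVer (MM.lunit MM.unit) (D.vId (DD.T.obj A X)))) =
      σ.ν (DD.T.obj A X)) ∧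
  (S.F0 = σ.ν DD.unit)

/-- A lax monoidal structure on the tensor product pseudodouble functor
`⊗ : M × M → M` of a vertically monoidal double category. -/
structure TensorLaxMonoidalStr (B : PreDoubleCat.{u}) (MM : VerMonoidal B) : Type u where
  F2 : ∀ A X Y Z : B.Obj,
      B.Ver (MM.T.obj (MM.T.obj A X) (MM.T.obj Y Z)) (MM.T.obj (MM.T.obj A Y) (MM.T.obj X Z))
  F2Sq : ∀ {A A' X X' Y Y' Z Z' : B.Obj}
      (f : B.Hor A A') (g : B.Hor X X') (h : B.Hor Y Y') (l : B.Hor Z Z'),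
      B.Sq (MM.T.hor (MM.T.hor f g) (MM.T.hor h l)) (MM.T.hor (MM.T.hor f h) (MM.T.hor g l))
        (F2 A X Y Z) (F2 A' X' Y' Z')
  F0 : B.Ver MM.unit (MM.T.obj MM.unit MM.unit)
  assocLaw : ∀ A X Y Z W V : B.Obj,
      B.vComp (MM.T.ver (F2 A X Y Z) (B.vId (MM.T.obj W V)))
          (B.vComp (F2 (MM.T.obj A Y) (MM.T.obj X Z) W V)
            (MM.T.ver (MM.assoc A Y W) (MM.assoc X Z V))) =
        B.vComp (MM.assoc (MM.T.obj A X) (MM.T.obj Y Z) (MM.T.obj W V))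
          (B.vComp (MM.T.ver (B.vId (MM.T.obj A X)) (F2 Y Z W V))
            (F2 A X (MM.T.obj Y W) (MM.T.obj Z V)))
  lunitLaw : ∀ A X : B.Obj,
      B.vComp (MM.T.ver F0 (B.vId (MM.T.obj A X)))
          (B.vComp (F2 MM.unit MM.unit A X) (MM.T.ver (MM.lunit A) (MM.lunit X))) =
        MM.lunit (MM.T.obj A X)
  runitLaw : ∀ A X : B.Obj,
      B.vComp (MM.T.ver (B.vId (MM.T.obj A X)) F0)
          (B.vComp (F2 A X MM.unit MM.unit) (MM.T.ver (MM.runit A) (MM.runit X))) =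
        MM.runit (MM.T.obj A X)

/-- The canonical pasting of the square-level 2-cocycle `Id_f ⊗ Φ_{g,h} ⊗ Id_l`
(with the necessary associator squares inserted). -/
def tensorCocyclePasting {B : PreDoubleCat.{u}} (MM : VerMonoidal B) (Φ : VerBraiding B MM)
    {A A' X X' Y Y' Z Z' : B.Obj}
    (f : B.Hor A A') (g : B.Hor X X') (h : B.Hor Y Y') (l : B.Hor Z Z') :
    B.Sq (MM.T.hor (MM.T.hor f g) (MM.T.hor h l)) (MM.T.hor (MM.T.hor f h) (MM.T.hor g l))
      (MM.mid4 Φ A X Y Z) (MM.mid4 Φ A' X' Y' Z') :=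
  B.vCompSq (MM.assocSq f g (MM.T.hor h l))
    (B.vCompSq
      (MM.T.sq (B.sqIdH f)
        (B.vCompSq (MM.assocSqInv g h l)
          (B.vCompSq (MM.T.sq (Φ.PhiSq g h) (B.sqIdH l)) (MM.assocSq h g l))))
      (MM.assocSqInv f h (MM.T.hor g l)))

/-- Horizontal 1-cells of `coPara_M(D)`: pairs `(P, f)` with `f : A → P ⊗̄ X`. -/
def coParaHor {M D : PreDoubleCat.{u}} {MM : HorMonoidal M} (σ : HorLaxAction M D MM)
    (A X : D.Obj) : Type u :=
  Σ P : M.Obj, D.Hor A (σ.act P X)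

/-- Squares of `coPara_M(D)`: a vertical 1-cell in `M` between the parameters
together with a compatible square in `D`. -/
structure CoParaSq {M D : PreDoubleCat.{u}} {MM : HorMonoidal M} (σ : HorLaxAction M D MM)
    {A B A' B' : D.Obj} (f : coParaHor σ A B) (g : coParaHor σ A' B')
    (u : D.Ver A A') (v : D.Ver B B') : Type u where
  par : M.Ver f.1 g.1
  sq : D.Sq f.2 g.2 u (σ.actVer par v)

/-- The coPara pseudodouble category of a horizontal lax action. -/
def coPara {M D : PreDoubleCat.{u}} {MM : HorMonoidal M} (σ : HorLaxAction M D MM) :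
    PreDoubleCat.{u} where
  Obj := D.Obj
  Hor := coParaHor σ
  Ver := D.Ver
  Sq := fun f g u v => CoParaSq σ f g u v
  hId A := ⟨MM.unit, σ.ν A⟩
  hComp := fun {A B C} f g =>
    ⟨MM.T.obj f.1 g.1, D.hComp f.2 (D.hComp (σ.actHor (M.hId f.1) g.2) (σ.β f.1 g.1 C))⟩
  vId := D.vId
  vComp := D.vComp
  sqIdH := fun {A B} f =>
    ⟨M.vId f.1, by rw [σ.actVer_id]; exact D.sqIdH f.2⟩
  sqIdV := fun {A B} u => ⟨M.vId MM.unit, σ.νVer u⟩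
  hCompSq := fun {A B C A' B' C' f g f' g' u w x} a b =>
    ⟨MM.T.ver a.par b.par,
      D.hCompSq a.sq (D.hCompSq (σ.actSq (M.sqIdV a.par) b.sq) (σ.βVer a.par b.par x))⟩
  vCompSq := fun a b =>
    ⟨M.vComp a.par b.par, by rw [σ.actVer_comp]; exact D.vCompSq a.sq b.sq⟩

/-- The canonical embedding `P : D → coPara_M(D)` on horizontal 1-cells:
`f : A → B` is sent to `ν_B ∘ f : A → J ⊗̄ B`. -/
def coParaOfHor {M D : PreDoubleCat.{u}} {MM : HorMonoidal M} (σ : HorLaxAction M D MM)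
    {A B : D.Obj} (f : D.Hor A B) : coParaHor σ A B :=
  ⟨MM.unit, D.hComp f (σ.ν B)⟩

/-- A left horizontal extension of the canonical action of `D` on itself along
the canonical embedding `P : D → coPara_M(D)`: a horizontal action
`▷ : D × coPara_M(D) → coPara_M(D)` together with an invertible horizontal
icon `θ : − ▷ P(−) ⇒ P(−⊗−)` compatible with the constraints. -/
structure LeftExtension {M D : PreDoubleCat.{u}} {MM : HorMonoidal M} (DD : HorMonoidal D)
    (σ : HorLaxAction M D MM) : Type u where
  actHor : ∀ {A A' X X' : D.Obj}, D.Hor A A' → coParaHor σ X X' →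
      coParaHor σ (DD.T.obj A X) (DD.T.obj A' X')
  actVer : ∀ {A A' X X' : D.Obj}, D.Ver A A' → D.Ver X X' →
      D.Ver (DD.T.obj A X) (DD.T.obj A' X')
  actSq : ∀ {A₁ A₂ A₃ A₄ X₁ X₂ X₃ X₄ : D.Obj}
      {f : D.Hor A₁ A₂} {g : D.Hor A₃ A₄} {u : D.Ver A₁ A₃} {v : D.Ver A₂ A₄}
      {p : coParaHor σ X₁ X₂} {q : coParaHor σ X₃ X₄} {u' : D.Ver X₁ X₃} {v' : D.Ver X₂ X₄},
      D.Sq f g u v → CoParaSq σ p q u' v' →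
      CoParaSq σ (actHor f p) (actHor g q) (actVer u u') (actVer v v')
  actComp : ∀ {A₁ A₂ A₃ X₁ X₂ X₃ : D.Obj} (f : D.Hor A₁ A₂) (f' : D.Hor A₂ A₃)
      (p : coParaHor σ X₁ X₂) (p' : coParaHor σ X₂ X₃),
      (coPara σ).GlobIso ((coPara σ).hComp (actHor f p) (actHor f' p'))
        (actHor (D.hComp f f') ((coPara σ).hComp p p'))
  actUnit : ∀ A X : D.Obj,
      (coPara σ).GlobIso ((coPara σ).hId (DD.T.obj A X)) (actHor (D.hId A) ((coPara σ).hId X))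
  aCon : ∀ A X Y : D.Obj,
      (coPara σ).HEquiv (DD.T.obj (DD.T.obj A X) Y) (DD.T.obj A (DD.T.obj X Y))
  lCon : ∀ X : D.Obj, (coPara σ).HEquiv (DD.T.obj DD.unit X) X
  theta : ∀ {A A' X X' : D.Obj} (f : D.Hor A A') (g : D.Hor X X'),
      (coPara σ).GlobIso (actHor f (coParaOfHor σ g)) (coParaOfHor σ (DD.T.hor f g))
  aCon_eq : ∀ A X Y, (aCon A X Y).fwd = coParaOfHor σ (DD.assoc A X Y)
  lCon_eq : ∀ X, (lCon X).fwd = coParaOfHor σ (DD.lunit X)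

/-- A right horizontal extension of the canonical action of `D` on itself along
the canonical embedding `P : D → coPara_M(D)`. -/
structure RightExtension {M D : PreDoubleCat.{u}} {MM : HorMonoidal M} (DD : HorMonoidal D)
    (σ : HorLaxAction M D MM) : Type u where
  actHor : ∀ {A A' X X' : D.Obj}, coParaHor σ A A' → D.Hor X X' →
      coParaHor σ (DD.T.obj A X) (DD.T.obj A' X')
  actVer : ∀ {A A' X X' : D.Obj}, D.Ver A A' → D.Ver X X' →
      D.Ver (DD.T.obj A X) (DD.T.obj A' X')
  actSq : ∀ {A₁ A₂ A₃ A₄ X₁ X₂ X₃ X₄ : D.Obj}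
      {p : coParaHor σ A₁ A₂} {q : coParaHor σ A₃ A₄} {u : D.Ver A₁ A₃} {v : D.Ver A₂ A₄}
      {f : D.Hor X₁ X₂} {g : D.Hor X₃ X₄} {u' : D.Ver X₁ X₃} {v' : D.Ver X₂ X₄},
      CoParaSq σ p q u v → D.Sq f g u' v' →
      CoParaSq σ (actHor p f) (actHor q g) (actVer u u') (actVer v v')
  actComp : ∀ {A₁ A₂ A₃ X₁ X₂ X₃ : D.Obj} (p : coParaHor σ A₁ A₂) (p' : coParaHor σ A₂ A₃)
      (f : D.Hor X₁ X₂) (f' : D.Hor X₂ X₃),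
      (coPara σ).GlobIso ((coPara σ).hComp (actHor p f) (actHor p' f'))
        (actHor ((coPara σ).hComp p p') (D.hComp f f'))
  actUnit : ∀ A X : D.Obj,
      (coPara σ).GlobIso ((coPara σ).hId (DD.T.obj A X)) (actHor ((coPara σ).hId A) (D.hId X))
  aCon : ∀ A X Y : D.Obj,
      (coPara σ).HEquiv (DD.T.obj (DD.T.obj A X) Y) (DD.T.obj A (DD.T.obj X Y))
  rCon : ∀ A : D.Obj, (coPara σ).HEquiv (DD.T.obj A DD.unit) A
  theta : ∀ {A A' X X' : D.Obj} (f : D.Hor A A') (g : D.Hor X X'),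
      (coPara σ).GlobIso (actHor (coParaOfHor σ f) g) (coParaOfHor σ (DD.T.hor f g))
  aCon_eq : ∀ A X Y, (aCon A X Y).fwd = coParaOfHor σ (DD.assoc A X Y)
  rCon_eq : ∀ A, (rCon A).fwd = coParaOfHor σ (DD.runit A)

/-- A horizontally monoidal structure on `coPara_M(D)` extending the monoidal
structure of `D`, via the invertible horizontal icon `θᴾ`. -/
structure MonoidalExtension {M D : PreDoubleCat.{u}} {MM : HorMonoidal M} (DD : HorMonoidal D)
    (σ : HorLaxAction M D MM) : Type u where
  mon : HorMonoidal (coPara σ)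
  onObj : mon.T.obj = DD.T.obj
  onUnit : mon.unit = DD.unit
  theta : ∀ {A A' X X' : D.Obj} (f : D.Hor A A') (g : D.Hor X X'),
      (coPara σ).GlobIso
        ((by rw [← onObj]
             exact mon.T.hor (coParaOfHor σ f) (coParaOfHor σ g) :
          (coPara σ).Hor (DD.T.obj A X) (DD.T.obj A' X')))
        (coParaOfHor σ (DD.T.hor f g))

/-- The double category `ₘM` obtained from a monoidal double category `M` and
an object `M₀`: same objects, and cells `X → Y` are the cells
`M₀ ⊗ X → M₀ ⊗ Y` of `M`. -/
def shiftDC (Mc : PreDoubleCat.{u}) (MM : HorMonoidal Mc) (M₀ : Mc.Obj) :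
    PreDoubleCat.{u} where
  Obj := Mc.Obj
  Hor A B := Mc.Hor (MM.T.obj M₀ A) (MM.T.obj M₀ B)
  Ver A B := Mc.Ver (MM.T.obj M₀ A) (MM.T.obj M₀ B)
  Sq := fun {_ _ _ _} f g u v => Mc.Sq f g u v
  hId A := Mc.hId (MM.T.obj M₀ A)
  hComp := fun f g => Mc.hComp f g
  vId A := Mc.vId (MM.T.obj M₀ A)
  vComp := fun u v => Mc.vComp u v
  sqIdH := fun f => Mc.sqIdH f
  sqIdV := fun u => Mc.sqIdV u
  hCompSq := fun a b => Mc.hCompSq a b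
  vCompSq := fun a b => Mc.vCompSq a b

/-- The braided conjugation 1-cell `γ_{M₀,A,X} : M₀⊗(A⊗X) → A⊗(M₀⊗X)`. -/
def gammaFwd {Mc : PreDoubleCat.{u}} (MM : HorMonoidal Mc) (Φ : HorBraiding Mc MM)
    (M₀ A X : Mc.Obj) : Mc.Hor (MM.T.obj M₀ (MM.T.obj A X)) (MM.T.obj A (MM.T.obj M₀ X)) :=
  Mc.hComp (MM.assocInv M₀ A X)
    (Mc.hComp (MM.T.hor (Φ.Phi M₀ A) (Mc.hId X)) (MM.assoc A M₀ X))

/-- The inverse braided conjugation 1-cell `A⊗(M₀⊗X) → M₀⊗(A⊗X)`. -/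
def gammaBwd {Mc : PreDoubleCat.{u}} (MM : HorMonoidal Mc) (Φ : HorBraiding Mc MM)
    (M₀ A X : Mc.Obj) : Mc.Hor (MM.T.obj A (MM.T.obj M₀ X)) (MM.T.obj M₀ (MM.T.obj A X)) :=
  Mc.hComp (MM.assocInv A M₀ X)
    (Mc.hComp (MM.T.hor (Φ.PhiInv M₀ A) (Mc.hId X)) (MM.assoc M₀ A X))

/-- A lax monoidal pseudodouble functor between vertically monoidal double
categories: vertical strict transformations `F²`, `F⁰` making the object- and
morphism-level functors lax monoidal (left and right normalized 2-cocycles). -/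
structure LaxMonFunctor (C D : PreDoubleCat.{u}) (CC : VerMonoidal C) (DD : VerMonoidal D) :
    Type u where
  F : LaxDoubleFunctor C D
  F2 : ∀ A X, D.Ver (DD.T.obj (F.obj A) (F.obj X)) (F.obj (CC.T.obj A X))
  F2Sq : ∀ {A A' X X' : C.Obj} (f : C.Hor A A') (g : C.Hor X X'),
      D.Sq (DD.T.hor (F.hor f) (F.hor g)) (F.hor (CC.T.hor f g)) (F2 A X) (F2 A' X')
  F0 : D.Ver DD.unit (F.obj CC.unit)
  assocLaw : ∀ A X Y,
      D.vComp (DD.T.ver (F2 A X) (D.vId (F.obj Y)))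
          (D.vComp (F2 (CC.T.obj A X) Y) (F.ver (CC.assoc A X Y))) =
        D.vComp (DD.assoc (F.obj A) (F.obj X) (F.obj Y))
          (D.vComp (DD.T.ver (D.vId (F.obj A)) (F2 X Y)) (F2 A (CC.T.obj X Y)))
  lunitLaw : ∀ A,
      D.vComp (DD.T.ver F0 (D.vId (F.obj A)))
          (D.vComp (F2 CC.unit A) (F.ver (CC.lunit A))) =
        DD.lunit (F.obj A)
  runitLaw : ∀ A,
      D.vComp (DD.T.ver (D.vId (F.obj A)) F0)
          (D.vComp (F2 A CC.unit) (F.ver (CC.runit A))) =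
        DD.runit (F.obj A)

/-- A pseudomonoidal vertical strict transformation between lax monoidal
pseudodouble functors (with invertible vertically globular cocycle 2-cells
`σ²`, `σ⁰`). -/
structure PsMonVerTransf {C D : PreDoubleCat.{u}} {CC : VerMonoidal C} {DD : VerMonoidal D}
    (F G : LaxMonFunctor C D CC DD) : Type u where
  base : VerTransf F.F G.F
  σ2 : ∀ A X,
      D.Sq (D.hId (DD.T.obj (F.F.obj A) (F.F.obj X))) (D.hId (G.F.obj (CC.T.obj A X)))
        (D.vComp (F.F2 A X) (base.app (CC.T.obj A X)))
        (D.vComp (DD.T.ver (base.app A) (base.app X)) (G.F2 A X))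
  σ0 : D.Sq (D.hId DD.unit) (D.hId (G.F.obj CC.unit))
      (D.vComp F.F0 (base.app CC.unit)) G.F0

/-- A pseudomonoidal vertical strict transformation is liftable when all its
1-cell components have companions. -/
def PsMonVerTransf.IsLiftable {C D : PreDoubleCat.{u}} {CC : VerMonoidal C}
    {DD : VerMonoidal D} {F G : LaxMonFunctor C D CC DD} (σ : PsMonVerTransf F G) : Prop :=
  ∀ A, D.Liftable (σ.base.app A)

/-- A monoidal horizontal pseudonatural transformation between lax monoidal
pseudodouble functors (with square-formed cocycle 2-cells `β²`, `β⁰`). -/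
structure MonHorTransf {C D : PreDoubleCat.{u}} {CC : VerMonoidal C} {DD : VerMonoidal D}
    (F G : LaxMonFunctor C D CC DD) : Type u where
  base : HorTransf F.F G.F
  β2 : ∀ A X,
      D.Sq (DD.T.hor (base.app A) (base.app X)) (base.app (CC.T.obj A X))
        (F.F2 A X) (G.F2 A X)
  β0 : D.Sq (D.hId DD.unit) (base.app CC.unit) F.F0 G.F0

/-- A vertical monoidal modification. -/
abbrev VerMonModif {C D : PreDoubleCat.{u}} {CC : VerMonoidal C} {DD : VerMonoidal D}
    {F G : LaxMonFunctor C D CC DD} (σ τ : PsMonVerTransf F G) : Type u :=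
  VerModif σ.base τ.base

/-- A horizontal monoidal modification. -/
abbrev HorMonModif {C D : PreDoubleCat.{u}} {CC : VerMonoidal C} {DD : VerMonoidal D}
    {F G : LaxMonFunctor C D CC DD} (β γ : MonHorTransf F G) : Type u :=
  HorModif β.base γ.base

/-- A strongly lax monoidal pseudodouble functor: a lax monoidal pseudodouble
functor whose structure transformations `F²`, `F⁰` are invertible. -/
structure StrongLaxMonFunctor (C D : PreDoubleCat.{u}) (CC : VerMonoidal C)
    (DD : VerMonoidal D) extends LaxMonFunctor C D CC DD where
  F2Iso : ∀ A X, D.VIso (F2 A X)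
  F0Iso : D.VIso F0

/-- A strongly lax monoidal pseudodouble functor is liftable when its
monoidality transformations `F²`, `F⁰` are liftable. -/
def StrongLaxMonFunctor.IsLiftable {C D : PreDoubleCat.{u}} {CC : VerMonoidal C}
    {DD : VerMonoidal D} (F : StrongLaxMonFunctor C D CC DD) : Prop :=
  (∀ A X, D.Liftable (F.F2 A X)) ∧ D.Liftable F.F0

/-- A strongly monoidal horizontal pseudonatural transformation between
strongly lax monoidal pseudodouble functors: the modification `β²` is
(vertically) invertible. -/
structure StrongMonHorTransf {C D : PreDoubleCat.{u}} {CC : VerMonoidal C}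
    {DD : VerMonoidal D} (F G : StrongLaxMonFunctor C D CC DD)
    extends MonHorTransf F.toLaxMonFunctor G.toLaxMonFunctor where
  β2Inv : ∀ A X,
      D.Sq (base.app (CC.T.obj A X)) (DD.T.hor (base.app A) (base.app X))
        ((F.F2Iso A X).inv) ((G.F2Iso A X).inv)

/-- A horizontally lax monoidal pseudodouble functor between horizontally
monoidal double categories: interchanger 1-cells `F²`, unit 1-cell `F⁰`,
horizontally globular invertible 2-cells `F²_{f,g}` and invertible
modifications `ω`, `δ`, `γ` for associativity and unitality. -/
structure HorLaxMonFunctor (C D : PreDoubleCat.{u}) (CC : HorMonoidal C) (DD : HorMonoidal D) :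
    Type u where
  F : LaxDoubleFunctor C D
  F2 : ∀ A X, D.Hor (DD.T.obj (F.obj A) (F.obj X)) (F.obj (CC.T.obj A X))
  F2Sq : ∀ {A A' X X' : C.Obj} (f : C.Hor A A') (g : C.Hor X X'),
      D.GlobIso (D.hComp (DD.T.hor (F.hor f) (F.hor g)) (F2 A' X'))
        (D.hComp (F2 A X) (F.hor (CC.T.hor f g)))
  F0 : D.Hor DD.unit (F.obj CC.unit)
  omega : ∀ A X Y,
      D.GlobIso
        (D.hComp (D.hComp (DD.T.hor (F2 A X) (D.hId (F.obj Y))) (F2 (CC.T.obj A X) Y))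
          (F.hor (CC.assoc A X Y)))
        (D.hComp (D.hComp (DD.assoc (F.obj A) (F.obj X) (F.obj Y))
            (DD.T.hor (D.hId (F.obj A)) (F2 X Y)))
          (F2 A (CC.T.obj X Y)))
  delta : ∀ A,
      D.GlobIso
        (D.hComp (D.hComp (DD.T.hor (D.hId (F.obj A)) F0) (F2 A CC.unit))
          (F.hor (CC.runit A)))
        (DD.runit (F.obj A))
  gamma : ∀ A,
      D.GlobIso
        (D.hComp (D.hComp (DD.T.hor F0 (D.hId (F.obj A))) (F2 CC.unit A))
          (F.hor (CC.lunit A)))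
        (DD.lunit (F.obj A))

/-- A pseudomonoidal vertical strict transformation in the horizontally
monoidal setting (square-formed cocycle components). -/
structure HPsMonVerTransf {C D : PreDoubleCat.{u}} {CC : HorMonoidal C} {DD : HorMonoidal D}
    (F G : HorLaxMonFunctor C D CC DD) : Type u where
  base : VerTransf F.F G.F
  σ2 : ∀ A X,
      D.Sq (F.F2 A X) (G.F2 A X)
        (DD.T.ver (base.app A) (base.app X)) (base.app (CC.T.obj A X))
  σ0 : D.Sq F.F0 G.F0 (D.vId DD.unit) (base.app CC.unit)

/-- A monoidal horizontal pseudonatural transformation in the horizontally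
monoidal setting (horizontally globular invertible cocycle components). -/
structure HMonHorTransf {C D : PreDoubleCat.{u}} {CC : HorMonoidal C} {DD : HorMonoidal D}
    (F G : HorLaxMonFunctor C D CC DD) : Type u where
  base : HorTransf F.F G.F
  β2 : ∀ A X,
      D.GlobIso (D.hComp (DD.T.hor (base.app A) (base.app X)) (G.F2 A X))
        (D.hComp (F.F2 A X) (base.app (CC.T.obj A X)))
  β0 : D.GlobIso (D.hComp F.F0 (base.app CC.unit)) G.F0

/-- Vertical composition of globular squares in a strict double category. -/
def DoubleCat.compGlob (E : DoubleCat.{u}) {A A' : E.Obj} {f g h : E.Hor A A'}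
    (s : E.toPreDoubleCat.Glob f g) (t : E.toPreDoubleCat.Glob g h) :
    E.toPreDoubleCat.Glob f h := by
  have hc := E.vCompSq s t
  rw [E.vId_comp, E.vId_comp] at hc
  exact hc

/-- Composition of lax double functors (with strict codomain). -/
def LaxDoubleFunctor.comp {C D : PreDoubleCat.{u}} {E : DoubleCat.{u}}
    (F : LaxDoubleFunctor C D) (G : LaxDoubleFunctor D E.toPreDoubleCat) :
    LaxDoubleFunctor C E.toPreDoubleCat where
  obj A := G.obj (F.obj A)
  hor f := G.hor (F.hor f)
  ver u := G.ver (F.ver u)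
  sq a := G.sq (F.sq a)
  ver_id A := by
    show G.ver (F.ver (C.vId A)) = E.vId (G.obj (F.obj A))
    rw [F.ver_id, G.ver_id]
  ver_comp u v := by
    show G.ver (F.ver (C.vComp u v)) = E.vComp (G.ver (F.ver u)) (G.ver (F.ver v))
    rw [F.ver_comp, G.ver_comp]
  hcomp f g := E.compGlob (G.hcomp (F.hor f) (F.hor g))
    (by have hc := G.sq (F.hcomp f g); simp only [G.ver_id] at hc; exact hc)
  hunit A := E.compGlob (G.hunit (F.obj A))
    (by have hc := G.sq (F.hunit A); simp only [G.ver_id] at hc; exact hc)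


/-!
The vertical 1-cells of a vertically monoidal double category form a monoidal category, which
`Φ` makes braided. In that braided category `mid4` is the middle-four interchange `tensorμ`,
so the associativity and unit laws of the 1-cocycle are `tensor_associativity`,
`tensor_left_unitality` and `tensor_right_unitality`.
-/

open CategoryTheory MonoidalCategory

/-- The vertical category of `B`, indexed by `MM` and `Φ` so that they can be found as its
monoidal and braided structure by instance search. -/
def VertCat (B : DoubleCat.{u}) (_MM : VerMonoidal B.toPreDoubleCat)
    (_Φ : VerBraiding B.toPreDoubleCat _MM) : Type u := B.Obj

namespace VertCat

variable {B : DoubleCat.{u}} {MM : VerMonoidal B.toPreDoubleCat}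
  {Φ : VerBraiding B.toPreDoubleCat MM}

instance : Category.{u} (VertCat B MM Φ) where
  Hom A X := B.Ver A X
  id A := B.vId A
  comp u v := B.vComp u v
  id_comp := B.vId_comp
  comp_id := B.comp_vId
  assoc := B.vAssoc

instance : MonoidalCategoryStruct (VertCat B MM Φ) where
  tensorObj := MM.T.obj
  whiskerLeft X _ _ f := MM.T.ver (B.vId X) f
  whiskerRight f Y := MM.T.ver f (B.vId Y)
  tensorHom := MM.T.ver
  tensorUnit := MM.unit
  associator A X Y :=
    ⟨MM.assoc A X Y, (MM.assocIso A X Y).inv, (MM.assocIso A X Y).left,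
      (MM.assocIso A X Y).right⟩
  leftUnitor A :=
    ⟨MM.lunit A, (MM.lunitIso A).inv, (MM.lunitIso A).left, (MM.lunitIso A).right⟩
  rightUnitor A :=
    ⟨MM.runit A, (MM.runitIso A).inv, (MM.runitIso A).left, (MM.runitIso A).right⟩

instance : MonoidalCategory (VertCat B MM Φ) :=
  .ofTensorHom
    (id_tensorHom_id := MM.T.ver_id)
    (id_tensorHom := by intros; rfl)
    (tensorHom_id := by intros; rfl)
    (tensorHom_comp_tensorHom := fun f₁ f₂ g₁ g₂ => (MM.T.ver_comp f₁ g₁ f₂ g₂).symm)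
    (associator_naturality := MM.assocNat)
    (leftUnitor_naturality := MM.lunitNat)
    (rightUnitor_naturality := MM.runitNat)
    (pentagon := fun W X Y Z => by
      rw [← Category.assoc]
      exact (MM.pentagon W X Y Z).symm)
    (triangle := MM.triangle)

instance : BraidedCategory (VertCat B MM Φ) where
  braiding A X :=
    ⟨Φ.Phi A X, (Φ.PhiIso A X).inv, (Φ.PhiIso A X).left, (Φ.PhiIso A X).right⟩
  braiding_naturality_right X _ _ f := Φ.PhiNat (B.vId X) f
  braiding_naturality_left f Z := Φ.PhiNat f (B.vId Z)
  hexagon_forward := Φ.hex₁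
  hexagon_reverse := Φ.hex₂

theorem mid4_eq_tensorμ (A X Y Z : VertCat B MM Φ) :
    MM.mid4 Φ A X Y Z = tensorμ A X Y Z := by
  change (α_ A X (Y ⊗ Z)).hom ≫
      (A ◁ ((α_ X Y Z).inv ≫ (β_ X Y).hom ▷ Z ≫ (α_ Y X Z).hom)) ≫
        (α_ A Y (X ⊗ Z)).inv = tensorμ A X Y Z
  simp only [tensorμ, whiskerLeft_comp, Category.assoc]

theorem mid4_assoc (A X Y Z W V : VertCat B MM Φ) :
    B.vComp (MM.T.ver (MM.mid4 Φ A X Y Z) (B.vId (MM.T.obj W V)))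
        (B.vComp (MM.mid4 Φ (MM.T.obj A Y) (MM.T.obj X Z) W V)
          (MM.T.ver (MM.assoc A Y W) (MM.assoc X Z V))) =
      B.vComp (MM.assoc (MM.T.obj A X) (MM.T.obj Y Z) (MM.T.obj W V))
        (B.vComp (MM.T.ver (B.vId (MM.T.obj A X)) (MM.mid4 Φ Y Z W V))
          (MM.mid4 Φ A X (MM.T.obj Y W) (MM.T.obj Z V))) := by
  have h := tensor_associativity A X Y Z W V
  simp only [← mid4_eq_tensorμ] at h
  exact h

theorem mid4_lunit (A X : VertCat B MM Φ) :
    B.vComp (MM.T.ver ((MM.lunitIso MM.unit).inv) (B.vId (MM.T.obj A X)))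
        (B.vComp (MM.mid4 Φ MM.unit MM.unit A X) (MM.T.ver (MM.lunit A) (MM.lunit X))) =
      MM.lunit (MM.T.obj A X) := by
  have h := (tensor_left_unitality A X).symm
  simp only [← mid4_eq_tensorμ] at h
  exact h

theorem mid4_runit (A X : VertCat B MM Φ) :
    B.vComp (MM.T.ver (B.vId (MM.T.obj A X)) ((MM.lunitIso MM.unit).inv))
        (B.vComp (MM.mid4 Φ A X MM.unit MM.unit) (MM.T.ver (MM.runit A) (MM.runit X))) =
      MM.runit (MM.T.obj A X) := by
  have h := (tensor_right_unitality A X).symm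
  simp only [← mid4_eq_tensorμ] at h
  exact h

end VertCat

namespace VerBraiding

variable {B : DoubleCat.{u}} {MM : VerMonoidal B.toPreDoubleCat}
  (Φ : VerBraiding B.toPreDoubleCat MM)

/-- `⊗⁰ = λ_I⁻¹` is the paper's `1^I ⊗ 1^I` once `I ⊗ I` is identified with `I`. -/
def tensorLaxMonoidalStr : TensorLaxMonoidalStr B.toPreDoubleCat MM where
  F2 := MM.mid4 Φ
  F2Sq := tensorCocyclePasting MM Φ
  F0 := (MM.lunitIso MM.unit).inv
  assocLaw := VertCat.mid4_assoc (Φ := Φ)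
  lunitLaw := VertCat.mid4_lunit (Φ := Φ)
  runitLaw := VertCat.mid4_runit (Φ := Φ)

end VerBraiding

/-- Let `M` be a vertically monoidal double category with a
vertical double braiding `Φ`. Then the monoidal product `⊗ : M × M → M` is a
lax monoidal double functor: its 1-cocycle is the middle-four interchange
built from `Φ`, its unit component `⊗⁰ : I → I⊗I` is `λ⁻¹_I` (identified with
`1^I ⊗ 1^I`), and its 2-cocycle at horizontal 1-cells `f, g, h, l` is given by
the 2-cells `Id_f ⊗ Φ_{g,h} ⊗ Id_l` (pasted with the associator squares). -/
theorem braided_tensor_is_lax_monoidal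
    (B : DoubleCat.{u}) (MM : VerMonoidal B.toPreDoubleCat)
    (Φ : VerBraiding B.toPreDoubleCat MM) :
    ∃ S : TensorLaxMonoidalStr B.toPreDoubleCat MM,
      (∀ A X Y Z, S.F2 A X Y Z = MM.mid4 Φ A X Y Z) ∧
      S.F0 = (MM.lunitIso MM.unit).inv ∧
      ∀ {A A' X X' Y Y' Z Z' : B.Obj}
        (f : B.Hor A A') (g : B.Hor X X') (h : B.Hor Y Y') (l : B.Hor Z Z'),
        HEq (S.F2Sq f g h l) (tensorCocyclePasting MM Φ f g h l) :=
  ⟨Φ.tensorLaxMonoidalStr, fun _ _ _ _ => rfl, rfl, fun _ _ _ _ => HEq.rfl⟩
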